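/- arXiv:2110.15419 — 6 statements merged into one kernel-verified Lean document; each statement's English description precedes it below -/
import Mathlib

section
/- Suppose disks with centers $c_1,c_2,c_3,c_4 \in \mathbb{R}^2$ and radii $r_1,\dots,r_4$ realize $K_{2,2}$ with non-edges $\{1,2\}$ and $\{3,4\}$, and assume no three centers are collinear. Then either the line through $c_1$ and $c_2$ intersects the segment $c_3c_4$, or the line through $c_3$ and $c_4$ intersects the segment $c_1c_2$. -/
section Aux

variable {E : Type*} [NormedAddCommGroup E] [NormedSpace ℝ E]

/-- If `d` lies in the convex hull of `{p, a, b}` and `d ≠ p`, then the line through `p`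
and `d` meets the segment `ab`. -/
lemma aux_inside (a b p d : E) (hd : d ∈ convexHull ℝ (insert p ({a, b} : Set E)))
    (hne : d ≠ p) :
    ∃ y, y ∈ segment ℝ a b ∧ y ∈ affineSpan ℝ ({p, d} : Set E) := by
  rw [convexHull_insert ⟨a, by simp⟩, mem_convexJoin] at hd
  obtain ⟨u, hu, y, hy, hdy⟩ := hd
  rw [Set.mem_singleton_iff] at hu
  rw [hu] at hdy
  rw [convexHull_pair] at hy
  obtain ⟨s, t, hs, ht, hst, hxy⟩ := hdy
  have ht0 : t ≠ 0 := by
    intro h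
    subst h
    apply hne
    have hs1 : s = 1 := by linarith
    rw [hs1, zero_smul, add_zero, one_smul] at hxy
    exact hxy.symm
  have hy_eq : y = AffineMap.lineMap p d (1 / t) := by
    rw [AffineMap.lineMap_apply_module]
    have hs1 : s = 1 - t := by linarith
    rw [← hxy, hs1]
    match_scalars <;> field_simp <;> ring
  refine ⟨y, hy, ?_⟩
  rw [hy_eq]
  exact AffineMap.lineMap_mem_affineSpan_pair _ _ _

/-- Triangle-inequality contradiction for crossing segments. -/
lemma aux_cross {a b a' b' x : E} (hx1 : x ∈ segment ℝ a a') (hx2 : x ∈ segment ℝ b b') :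
    dist a b + dist a' b' ≤ dist a a' + dist b b' := by
  have h1 := dist_add_dist_of_mem_segment hx1
  have h2 := dist_add_dist_of_mem_segment hx2
  have h3 := dist_triangle a x b
  have h4 := dist_triangle a' x b'
  have e1 : dist x a' = dist a' x := dist_comm _ _
  have e2 : dist x b' = dist b' x := dist_comm _ _
  have e3 : dist x b = dist b x := dist_comm _ _
  linarith

end Aux

/-- **Corollary `cor:intersect`.** Suppose disks with centers
`c 0, c 1, c 2, c 3` and radii `r i` realize `K_{2,2}` with non-edges `{0,1}`
and `{2,3}`, and no three of the centers are collinear.  Then the line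
through `c 0` and `c 1` meets the segment `c₂c₃`, or the line through `c 2`
and `c 3` meets the segment `c₀c₁`. -/
theorem stmt_2 (c : Fin 4 → EuclideanSpace ℝ (Fin 2)) (r : Fin 4 → ℝ)
    (hr : ∀ i, 0 ≤ r i)
    (h01 : dist (c 0) (c 1) > r 0 + r 1)
    (h23 : dist (c 2) (c 3) > r 2 + r 3)
    (hadj : ∀ i j : Fin 4, i ≠ j → ¬({i, j} : Set (Fin 4)) = {0, 1} →
      ¬({i, j} : Set (Fin 4)) = {2, 3} → dist (c i) (c j) ≤ r i + r j)
    (hgen : ∀ i j k : Fin 4, i ≠ j → j ≠ k → i ≠ k →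
      ¬Collinear ℝ ({c i, c j, c k} : Set (EuclideanSpace ℝ (Fin 2)))) :
    ((↑(affineSpan ℝ ({c 0, c 1} : Set (EuclideanSpace ℝ (Fin 2)))) ∩
        segment ℝ (c 2) (c 3)).Nonempty) ∨
    ((↑(affineSpan ℝ ({c 2, c 3} : Set (EuclideanSpace ℝ (Fin 2)))) ∩
        segment ℝ (c 0) (c 1)).Nonempty) := by
  -- the four centers are affinely dependent
  have hdep : ¬ AffineIndependent ℝ c := by
    intro h
    have h1 := h.card_le_finrank_succ
    have h2 := Submodule.finrank_le (vectorSpan ℝ (Set.range c))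
    simp [finrank_euclideanSpace] at h1 h2
    omega
  obtain ⟨I, x, hx1, hx2⟩ := Convex.radon_partition hdep
  -- distances between "edge" pairs
  have d02 : dist (c 0) (c 2) ≤ r 0 + r 2 := by
    refine hadj 0 2 (by decide) ?_ ?_ <;>
      · intro h; have := Set.ext_iff.mp h; revert this; decide
  have d13 : dist (c 1) (c 3) ≤ r 1 + r 3 := by
    refine hadj 1 3 (by decide) ?_ ?_ <;>
      · intro h; have := Set.ext_iff.mp h; revert this; decide
  have d03 : dist (c 0) (c 3) ≤ r 0 + r 3 := by
    refine hadj 0 3 (by decide) ?_ ?_ <;>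
      · intro h; have := Set.ext_iff.mp h; revert this; decide
  have d12 : dist (c 1) (c 2) ≤ r 1 + r 2 := by
    refine hadj 1 2 (by decide) ?_ ?_ <;>
      · intro h; have := Set.ext_iff.mp h; revert this; decide
  -- the centers are pairwise distinct
  have hne : ∀ i j : Fin 4, i ≠ j → c i ≠ c j := by
    intro i j hij h
    obtain ⟨k, hk1, hk2⟩ : ∃ k : Fin 4, j ≠ k ∧ i ≠ k := by
      have : ∀ i j : Fin 4, i ≠ j → ∃ k : Fin 4, j ≠ k ∧ i ≠ k := by decide
      exact this i j hij
    apply hgen i j k hij hk1 hk2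
    rw [h]
    have h2 : ({c j, c j, c k} : Set (EuclideanSpace ℝ (Fin 2))) = {c j, c k} := by
      simp
    rw [h2]
    exact collinear_pair ℝ _ _
  -- main case analysis, WLOG `0 ∈ I`
  suffices H : ∀ I : Set (Fin 4), ∀ x, (0 : Fin 4) ∈ I →
      x ∈ convexHull ℝ (c '' I) → x ∈ convexHull ℝ (c '' Iᶜ) →
      ((↑(affineSpan ℝ ({c 0, c 1} : Set (EuclideanSpace ℝ (Fin 2)))) ∩
          segment ℝ (c 2) (c 3)).Nonempty) ∨
      ((↑(affineSpan ℝ ({c 2, c 3} : Set (EuclideanSpace ℝ (Fin 2)))) ∩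
          segment ℝ (c 0) (c 1)).Nonempty) by
    by_cases h0 : (0 : Fin 4) ∈ I
    · exact H I x h0 hx1 hx2
    · exact H Iᶜ x h0 hx2 (by rwa [compl_compl])
  clear hx1 hx2 I x
  intro I x h0 hx1 hx2
  by_cases h1 : (1 : Fin 4) ∈ I <;> by_cases h2 : (2 : Fin 4) ∈ I <;>
    by_cases h3 : (3 : Fin 4) ∈ I
  -- I = univ
  · have hIc : Iᶜ = (∅ : Set (Fin 4)) := by
      ext i; fin_cases i <;> simp [h0, h1, h2, h3]
    rw [hIc] at hx2; simp at hx2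
  -- I = {0,1,2}, Iᶜ = {3}
  · have hI : I = ({2, 0, 1} : Set (Fin 4)) := by
      ext i; fin_cases i <;> simp [h0, h1, h2, h3]
    have hIc : Iᶜ = ({3} : Set (Fin 4)) := by
      ext i; fin_cases i <;> simp [h0, h1, h2, h3]
    rw [hI, Set.image_insert_eq, Set.image_insert_eq, Set.image_singleton] at hx1
    rw [hIc, Set.image_singleton, convexHull_singleton, Set.mem_singleton_iff] at hx2
    subst hx2
    obtain ⟨y, hy1, hy2⟩ := aux_inside (c 0) (c 1) (c 2) (c 3) hx1 (hne 3 2 (by decide))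
    exact Or.inr ⟨y, hy2, hy1⟩
  -- I = {0,1,3}, Iᶜ = {2}
  · have hI : I = ({3, 0, 1} : Set (Fin 4)) := by
      ext i; fin_cases i <;> simp [h0, h1, h2, h3]
    have hIc : Iᶜ = ({2} : Set (Fin 4)) := by
      ext i; fin_cases i <;> simp [h0, h1, h2, h3]
    rw [hI, Set.image_insert_eq, Set.image_insert_eq, Set.image_singleton] at hx1
    rw [hIc, Set.image_singleton, convexHull_singleton, Set.mem_singleton_iff] at hx2
    subst hx2
    obtain ⟨y, hy1, hy2⟩ := aux_inside (c 0) (c 1) (c 3) (c 2) hx1 (hne 2 3 (by decide))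
    rw [Set.pair_comm (c 3) (c 2)] at hy2
    exact Or.inr ⟨y, hy2, hy1⟩
  -- I = {0,1}, Iᶜ = {2,3}
  · have hI : I = ({0, 1} : Set (Fin 4)) := by
      ext i; fin_cases i <;> simp [h0, h1, h2, h3]
    have hIc : Iᶜ = ({2, 3} : Set (Fin 4)) := by
      ext i; fin_cases i <;> simp [h0, h1, h2, h3]
    rw [hI, Set.image_insert_eq, Set.image_singleton] at hx1
    rw [hIc, Set.image_insert_eq, Set.image_singleton, convexHull_pair] at hx2
    exact Or.inl ⟨x, convexHull_subset_affineSpan _ hx1, hx2⟩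
  -- I = {0,2,3}, Iᶜ = {1}
  · have hI : I = ({0, 2, 3} : Set (Fin 4)) := by
      ext i; fin_cases i <;> simp [h0, h1, h2, h3]
    have hIc : Iᶜ = ({1} : Set (Fin 4)) := by
      ext i; fin_cases i <;> simp [h0, h1, h2, h3]
    rw [hI, Set.image_insert_eq, Set.image_insert_eq, Set.image_singleton] at hx1
    rw [hIc, Set.image_singleton, convexHull_singleton, Set.mem_singleton_iff] at hx2
    subst hx2
    obtain ⟨y, hy1, hy2⟩ := aux_inside (c 2) (c 3) (c 0) (c 1) hx1 (hne 1 0 (by decide))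
    exact Or.inl ⟨y, hy2, hy1⟩
  -- I = {0,2}, Iᶜ = {1,3} : crossing contradiction
  · exfalso
    have hI : I = ({0, 2} : Set (Fin 4)) := by
      ext i; fin_cases i <;> simp [h0, h1, h2, h3]
    have hIc : Iᶜ = ({1, 3} : Set (Fin 4)) := by
      ext i; fin_cases i <;> simp [h0, h1, h2, h3]
    rw [hI, Set.image_insert_eq, Set.image_singleton, convexHull_pair] at hx1
    rw [hIc, Set.image_insert_eq, Set.image_singleton, convexHull_pair] at hx2
    have := aux_cross hx1 hx2
    linarith
  -- I = {0,3}, Iᶜ = {1,2} : crossing contradiction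
  · exfalso
    have hI : I = ({0, 3} : Set (Fin 4)) := by
      ext i; fin_cases i <;> simp [h0, h1, h2, h3]
    have hIc : Iᶜ = ({1, 2} : Set (Fin 4)) := by
      ext i; fin_cases i <;> simp [h0, h1, h2, h3]
    rw [hI, Set.image_insert_eq, Set.image_singleton, convexHull_pair] at hx1
    rw [hIc, Set.image_insert_eq, Set.image_singleton, convexHull_pair] at hx2
    have := aux_cross hx1 hx2
    have e : dist (c 3) (c 2) = dist (c 2) (c 3) := dist_comm _ _
    linarith
  -- I = {0}, Iᶜ = {1,2,3}
  · have hI : I = ({0} : Set (Fin 4)) := by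
      ext i; fin_cases i <;> simp [h0, h1, h2, h3]
    have hIc : Iᶜ = ({1, 2, 3} : Set (Fin 4)) := by
      ext i; fin_cases i <;> simp [h0, h1, h2, h3]
    rw [hI, Set.image_singleton, convexHull_singleton, Set.mem_singleton_iff] at hx1
    subst hx1
    rw [hIc, Set.image_insert_eq, Set.image_insert_eq, Set.image_singleton] at hx2
    obtain ⟨y, hy1, hy2⟩ := aux_inside (c 2) (c 3) (c 1) (c 0) hx2 (hne 0 1 (by decide))
    rw [Set.pair_comm (c 1) (c 0)] at hy2
    exact Or.inl ⟨y, hy2, hy1⟩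
end

section
/- Two closed antipodally symmetric curves on the unit 2-sphere must intersect: if $\gamma_1, \gamma_2 : S^1 \to S^2$ are continuous closed curves whose images $\Gamma_1, \Gamma_2$ are each closed under the antipodal map $x \mapsto -x$, then $\Gamma_1 \cap \Gamma_2 \neq \emptyset$. -/
set_option maxHeartbeats 1000000

open Complex Set
open scoped RealInnerProductSpace

local notation "E3" => EuclideanSpace ℝ (Fin 3)


lemma exp_arg_of_abs {z : ℂ} (hz : ‖z‖ = 1) : Complex.exp (z.arg * I) = z := by
  have h := Complex.norm_mul_exp_arg_mul_I z
  rw [hz] at h; simpa using h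

lemma const_of_exp (f : ℝ → ℝ) (hf : ContinuousOn f (Set.Icc 0 1)) (z : ℂ)
    (hz : ∀ x ∈ Set.Icc (0:ℝ) 1, Complex.exp (f x * I) = z) : f 1 = f 0 := by
  have h0 : (0:ℝ) ∈ Icc (0:ℝ) 1 := by norm_num
  have h1 : (1:ℝ) ∈ Icc (0:ℝ) 1 := by norm_num
  have hint : ∀ x ∈ Icc (0:ℝ) 1, ∃ n : ℤ, f x - f 0 = n * (2 * Real.pi) := by
    intro x hx
    have hexp : Complex.exp ((f x - f 0 : ℝ) * I) = 1 := by
      have hz0 : z ≠ 0 := by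
        rw [← hz 0 h0]; exact Complex.exp_ne_zero _
      rw [show ((f x - f 0 : ℝ) : ℂ) * I = f x * I - f 0 * I by push_cast; ring,
        Complex.exp_sub, hz x hx, hz 0 h0, div_self hz0]
    rw [Complex.exp_eq_one_iff] at hexp
    obtain ⟨n, hn⟩ := hexp
    refine ⟨n, ?_⟩
    have h2 : ((f x - f 0 : ℝ) : ℂ) = ((n * (2 * Real.pi) : ℝ) : ℂ) := by
      apply mul_right_cancel₀ Complex.I_ne_zero
      rw [hn]; push_cast; ring
    exact_mod_cast h2
  by_contra hne
  obtain ⟨n, hn⟩ := hint 1 h1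
  have hπ := Real.pi_pos
  have hn0 : n ≠ 0 := by
    rintro rfl; simp at hn; apply hne; linarith
  have absurd : ∀ x ∈ Icc (0:ℝ) 1, f x - f 0 ≠ Real.pi ∧ f x - f 0 ≠ -Real.pi := by
    intro x hx
    obtain ⟨m, hm⟩ := hint x hx
    constructor <;> intro heq <;> rw [heq] at hm
    · have h2 : Real.pi * 1 = Real.pi * ((2*m : ℤ) : ℝ) := by push_cast; linarith
      have h3 : (1:ℝ) = ((2*m : ℤ) : ℝ) := mul_left_cancel₀ (ne_of_gt hπ) h2
      have h4 : (1:ℤ) = 2*m := by exact_mod_cast h3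
      omega
    · have h2 : Real.pi * (-1) = Real.pi * ((2*m : ℤ) : ℝ) := by push_cast; linarith
      have h3 : (-1:ℝ) = ((2*m : ℤ) : ℝ) := mul_left_cancel₀ (ne_of_gt hπ) h2
      have h4 : (-1:ℤ) = 2*m := by exact_mod_cast h3
      omega
  rcases hn0.lt_or_gt with hneg | hpos
  · -- n ≤ -1 : f 1 ≤ f 0 - 2π
    have hn1 : (n : ℝ) ≤ -1 := by exact_mod_cast (by omega : n ≤ -1)
    have hy : f 0 - Real.pi ∈ Icc (f 1) (f 0) := by
      constructor <;> nlinarith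
    obtain ⟨x, hx, hfx⟩ := intermediate_value_Icc' (by norm_num : (0:ℝ) ≤ 1) hf hy
    exact (absurd x hx).2 (by linarith)
  · have hn1 : (1:ℝ) ≤ (n : ℝ) := by exact_mod_cast hpos
    have hy : f 0 + Real.pi ∈ Icc (f 0) (f 1) := by
      constructor <;> nlinarith
    obtain ⟨x, hx, hfx⟩ := intermediate_value_Icc (by norm_num : (0:ℝ) ≤ 1) hf hy
    exact (absurd x hx).1 (by linarith)

lemma square_winding (W : ℝ × ℝ → ℂ) (hW : Continuous W)
    (habs : ∀ p, ‖W p‖ = 1)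
    (htop : ∀ s : ℝ, W (s, 1) = - W (s, 0))
    (hside : ∀ t : ℝ, W (1, t) * W (0, t) = 1) : False := by
  have hne0 : ∀ p, W p ≠ 0 := by
    intro p h
    have := habs p
    rw [h] at this; simp at this
  set K : Set (ℝ × ℝ) := (Icc (0:ℝ) 1) ×ˢ (Icc (0:ℝ) 1) with hK
  have hKc : IsCompact K := isCompact_Icc.prod isCompact_Icc
  have hUC := hKc.uniformContinuousOn_of_continuous hW.continuousOn
  rw [Metric.uniformContinuousOn_iff] at hUC
  obtain ⟨δ, hδ, hδ'⟩ := hUC 1 one_pos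
  obtain ⟨n, hngt⟩ := exists_nat_gt (2 / δ)
  have hn0 : (0:ℝ) < n := lt_of_le_of_lt (by positivity) hngt
  have hnne : (n:ℝ) ≠ 0 := ne_of_gt hn0
  -- membership of scaled points
  have hscale : ∀ p ∈ K, ∀ a : ℝ, 0 ≤ a → a ≤ 1 → a • p ∈ K := by
    rintro ⟨p₁, p₂⟩ hp a ha0 ha1
    simp only [hK, Set.mem_prod, Set.mem_Icc, Prod.smul_mk, smul_eq_mul] at hp ⊢
    obtain ⟨⟨h1, h2⟩, h3, h4⟩ := hp
    exact ⟨⟨mul_nonneg ha0 h1, by nlinarith⟩, ⟨mul_nonneg ha0 h3, by nlinarith⟩⟩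
  have hfrac : ∀ k : ℕ, k ≤ n → (0:ℝ) ≤ (k:ℝ)/n ∧ (k:ℝ)/n ≤ 1 := by
    intro k hk
    constructor
    · positivity
    · rw [div_le_one hn0]; exact_mod_cast hk
  -- distance of consecutive points
  have hdist : ∀ p ∈ K, ∀ k : ℕ, dist ((((k:ℝ)+1)/n) • p) (((k:ℝ)/n) • p) < δ := by
    intro p hp k
    have hpnorm : ‖p‖ ≤ 1 := by
      obtain ⟨p₁, p₂⟩ := p
      simp only [hK, Set.mem_prod, Set.mem_Icc] at hp
      rw [Prod.norm_def]
      simp only [Real.norm_eq_abs]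
      apply max_le <;> rw [abs_le] <;> constructor <;> linarith [hp.1.1, hp.1.2, hp.2.1, hp.2.2]
    rw [dist_eq_norm, ← sub_smul, norm_smul]
    have h1 : ((k:ℝ)+1)/n - (k:ℝ)/n = 1/n := by field_simp; ring
    rw [h1]
    have h2 : ‖(1/(n:ℝ))‖ = 1/n := by
      rw [Real.norm_eq_abs, abs_of_pos (by positivity)]
    rw [h2]
    have : 1/(n:ℝ) < δ/2 := by
      rw [div_lt_iff₀ hn0]
      rw [div_lt_iff₀ hδ] at hngt
      nlinarith
    nlinarith [mul_le_of_le_one_right (le_of_lt (by positivity : (0:ℝ) < 1/(n:ℝ))) hpnorm,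
      mul_le_mul_of_nonneg_left hpnorm (le_of_lt (by positivity : (0:ℝ) < 1/(n:ℝ)))]
  -- the lift
  set θ : ℝ × ℝ → ℝ := fun p => (W 0).arg +
    ∑ k ∈ Finset.range n, (W ((((k:ℝ)+1)/n) • p) / W (((k:ℝ)/n) • p)).arg with hθ
  -- telescoping
  have htel : ∀ p ∈ K, ∀ m : ℕ, m ≤ n →
      Complex.exp ((((W 0).arg +
        ∑ k ∈ Finset.range m, (W ((((k:ℝ)+1)/n) • p) / W (((k:ℝ)/n) • p)).arg : ℝ)) * I)
        = W (((m:ℝ)/n) • p) := by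
    intro p hp m
    induction m with
    | zero =>
      intro _
      simp only [Finset.sum_range_zero, add_zero, Nat.cast_zero, zero_div, zero_smul]
      exact exp_arg_of_abs (habs 0)
    | succ m ih =>
      intro hm
      have ihh := ih (le_of_lt (Nat.lt_of_succ_le hm))
      rw [Finset.sum_range_succ]
      have hsplit : ((((W 0).arg + (∑ k ∈ Finset.range m,
          (W ((((k:ℝ)+1)/n) • p) / W (((k:ℝ)/n) • p)).arg +
          (W ((((m:ℝ)+1)/n) • p) / W (((m:ℝ)/n) • p)).arg) : ℝ)) : ℂ) * I
          = (((W 0).arg + ∑ k ∈ Finset.range m,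
            (W ((((k:ℝ)+1)/n) • p) / W (((k:ℝ)/n) • p)).arg : ℝ) : ℂ) * I
            + ((W ((((m:ℝ)+1)/n) • p) / W (((m:ℝ)/n) • p)).arg : ℂ) * I := by
        push_cast; ring
      rw [hsplit, Complex.exp_add, ihh]
      have hr : ‖W ((((m:ℝ)+1)/n) • p) / W (((m:ℝ)/n) • p)‖ = 1 := by
        rw [norm_div, habs, habs]; norm_num
      rw [exp_arg_of_abs hr]
      rw [mul_comm, div_mul_cancel₀ _ (hne0 _)]
      push_cast
      ring_nf
  have hexp : ∀ p ∈ K, Complex.exp ((θ p : ℝ) * I) = W p := by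
    intro p hp
    have := htel p hp n le_rfl
    rw [div_self hnne, one_smul] at this
    exact this
  -- continuity of the lift on K
  have hθc : ContinuousOn θ K := by
    apply ContinuousOn.add continuousOn_const
    apply continuousOn_finset_sum
    intro k hk
    have hRc : Continuous (fun p : ℝ × ℝ =>
        W ((((k:ℝ)+1)/n) • p) / W (((k:ℝ)/n) • p)) := by
      apply Continuous.div
      · exact hW.comp (continuous_const_smul _)
      · exact hW.comp (continuous_const_smul _)
      · exact fun p => hne0 _
    intro p hp
    have hk' : k < n := Finset.mem_range.mp hk
    have hm1 : (((k:ℝ)+1)/n) • p ∈ K := by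
      apply hscale p hp
      · positivity
      · rw [div_le_one hn0]; exact_mod_cast hk'
    have hm2 : ((k:ℝ)/n) • p ∈ K := by
      exact hscale p hp _ ((hfrac k (le_of_lt hk')).1) ((hfrac k (le_of_lt hk')).2)
    have hd := hδ' _ hm1 _ hm2 (hdist p hp k)
    set R := W ((((k:ℝ)+1)/n) • p) / W (((k:ℝ)/n) • p) with hR
    have hRabs : ‖R‖ = 1 := by
      rw [hR, norm_div, habs, habs]; norm_num
    have hR1 : ‖R - 1‖ < 1 := by
      rw [hR, div_sub_one (hne0 _), norm_div, habs]
      rw [Complex.dist_eq] at hd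
      simpa using hd
    have h1 : R.re ^ 2 + R.im ^ 2 = 1 := by
      have := Complex.sq_norm R
      rw [hRabs] at this
      rw [Complex.normSq_apply] at this
      nlinarith [this]
    have h2 : (R.re - 1) ^ 2 + R.im ^ 2 < 1 := by
      have hsq : ‖R - 1‖ ^ 2 < 1 := by
        nlinarith [norm_nonneg (R - 1)]
      rw [Complex.sq_norm, Complex.normSq_apply] at hsq
      simp only [Complex.sub_re, Complex.sub_im, Complex.one_re, Complex.one_im, sub_zero] at hsq
      nlinarith [hsq]
    have hslit : (0:ℝ) < R.re ∨ R.im ≠ 0 := by left; nlinarith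
    rw [hR] at hslit
    apply ContinuousAt.continuousWithinAt
    exact ContinuousAt.comp (g := Complex.arg)
      (f := fun a : ℝ × ℝ => W ((((k:ℝ)+1)/n) • a) / W (((k:ℝ)/n) • a)) (x := p)
      (Complex.continuousAt_arg hslit) hRc.continuousAt
  -- boundary functions
  have hmem : ∀ x ∈ Icc (0:ℝ) 1, ∀ y ∈ Icc (0:ℝ) 1, ((x,y) : ℝ × ℝ) ∈ K := by
    intro x hx y hy; exact ⟨hx, hy⟩
  have h01 : (0:ℝ) ∈ Icc (0:ℝ) 1 := by norm_num
  have h11 : (1:ℝ) ∈ Icc (0:ℝ) 1 := by norm_num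
  -- g
  have hgexp : ∀ s ∈ Icc (0:ℝ) 1, Complex.exp ((θ (s,1) - θ (s,0) : ℝ) * I) = -1 := by
    intro s hs
    rw [show ((θ (s,1) - θ (s,0) : ℝ) : ℂ) * I = (θ (s,1) : ℝ) * I - (θ (s,0) : ℝ) * I by
      push_cast; ring, Complex.exp_sub, hexp _ (hmem s hs 1 h11), hexp _ (hmem s hs 0 h01),
      htop s, neg_div, div_self (hne0 _)]
  have hhexp : ∀ t ∈ Icc (0:ℝ) 1, Complex.exp ((θ (1,t) + θ (0,t) : ℝ) * I) = 1 := by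
    intro t ht
    rw [show ((θ (1,t) + θ (0,t) : ℝ) : ℂ) * I = (θ (1,t) : ℝ) * I + (θ (0,t) : ℝ) * I by
      push_cast; ring, Complex.exp_add, hexp _ (hmem 1 h11 t ht), hexp _ (hmem 0 h01 t ht),
      hside t]
  have hgc : ContinuousOn (fun s : ℝ => θ (s,1) - θ (s,0)) (Icc 0 1) := by
    apply ContinuousOn.sub
    · exact hθc.comp (continuous_id.prodMk continuous_const).continuousOn
        (fun s hs => hmem s hs 1 h11)
    · exact hθc.comp (continuous_id.prodMk continuous_const).continuousOn
        (fun s hs => hmem s hs 0 h01)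
  have hhc : ContinuousOn (fun t : ℝ => θ (1,t) + θ (0,t)) (Icc 0 1) := by
    apply ContinuousOn.add
    · exact hθc.comp (continuous_const.prodMk continuous_id).continuousOn
        (fun t ht => hmem 1 h11 t ht)
    · exact hθc.comp (continuous_const.prodMk continuous_id).continuousOn
        (fun t ht => hmem 0 h01 t ht)
  have hg := const_of_exp _ hgc (-1) hgexp
  have hh := const_of_exp _ hhc 1 hhexp
  have hθeq : θ (1,1) = θ (1,0) := by linarith
  have := hgexp 1 h11
  rw [show ((θ (1,1) - θ (1,0) : ℝ) : ℂ) = 0 by rw [hθeq]; simp] at this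
  norm_num at this


noncomputable def cross3 (x y : E3) : E3 :=
  (WithLp.equiv 2 (Fin 3 → ℝ)).symm
    ![x 1 * y 2 - x 2 * y 1, x 2 * y 0 - x 0 * y 2, x 0 * y 1 - x 1 * y 0]

lemma inner3 (x y : E3) : ⟪x, y⟫ = x 0 * y 0 + x 1 * y 1 + x 2 * y 2 := by
  simp [PiLp.inner_apply, Fin.sum_univ_three, RCLike.inner_apply, mul_comm]

lemma inner_cross3_left (x y u : E3) :
    ⟪u, cross3 x y⟫ = u 0 * (x 1 * y 2 - x 2 * y 1) + u 1 * (x 2 * y 0 - x 0 * y 2)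
      + u 2 * (x 0 * y 1 - x 1 * y 0) := by
  rw [inner3]; rfl

lemma cross3_neg_left (x y : E3) : cross3 (-x) y = - cross3 x y := by
  ext i
  fin_cases i <;>
    · show cross3 _ _ _ = (-cross3 x y) _
      simp only [cross3, WithLp.equiv_symm_apply, PiLp.toLp_apply, PiLp.neg_apply,
        show ∀ j, (-x : E3) j = - x j from fun _ => rfl]
      norm_num [Matrix.cons_val_zero, Matrix.cons_val_one]
      ring

lemma cross3_continuous {X : Type*} [TopologicalSpace X] {f g : X → E3}
    (hf : Continuous f) (hg : Continuous g) :
    Continuous fun x => cross3 (f x) (g x) := by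
  apply (PiLp.continuous_toLp 2 (fun _ : Fin 3 => ℝ)).comp
  apply continuous_pi
  intro i
  have hfa : ∀ j : Fin 3, Continuous fun x => f x j :=
    fun j => ((EuclideanSpace.proj j : E3 →L[ℝ] ℝ).continuous).comp hf
  have hga : ∀ j : Fin 3, Continuous fun x => g x j :=
    fun j => ((EuclideanSpace.proj j : E3 →L[ℝ] ℝ).continuous).comp hg
  fin_cases i <;> simp only [Matrix.cons_val_zero, Matrix.cons_val_one, Matrix.head_cons,
    Matrix.cons_val_two, Matrix.tail_cons] <;>
    exact ((hfa _).mul (hga _)).sub ((hfa _).mul (hga _))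

lemma parseval3 (x e u : E3) (hx : ⟪x, x⟫ = 1) (he : ⟪e, e⟫ = 1) (hxe : ⟪x, e⟫ = 0)
    (hu : ⟪u, u⟫ = 1) (hux : ⟪u, x⟫ = 0) :
    ⟪u, e⟫ ^ 2 + ⟪u, cross3 x e⟫ ^ 2 = 1 := by
  rw [inner_cross3_left]
  rw [inner3] at *
  linear_combination
    ((x 0*x 0+x 1*x 1+x 2*x 2) * (e 0*e 0+e 1*e 1+e 2*e 2)) * hu
    + ((e 0*e 0+e 1*e 1+e 2*e 2) - (u 0*e 0+u 1*e 1+u 2*e 2)^2) * hx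
    + he
    + (2*(u 0*x 0+u 1*x 1+u 2*x 2)*(u 0*e 0+u 1*e 1+u 2*e 2)
        - (u 0*u 0+u 1*u 1+u 2*u 2)*(x 0*e 0+x 1*e 1+x 2*e 2)) * hxe
    - ((e 0*e 0+e 1*e 1+e 2*e 2)*(u 0*x 0+u 1*x 1+u 2*x 2)) * hux

lemma nz_inner_self {v : E3} (hv : v ≠ 0) : ⟪‖v‖⁻¹ • v, ‖v‖⁻¹ • v⟫ = 1 := by
  rw [real_inner_smul_left, real_inner_smul_right, real_inner_self_eq_norm_mul_norm]
  have h : ‖v‖ ≠ 0 := norm_ne_zero_iff.mpr hv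
  field_simp

lemma sub_proj_ne_zero {x y : E3} (hx : ‖x‖ = 1) (hy : ‖y‖ = 1) (h1 : y ≠ x) (h2 : y ≠ -x) :
    y - ⟪y, x⟫ • x ≠ 0 := by
  intro h
  rw [sub_eq_zero] at h
  have hn : |⟪y, x⟫| = 1 := by
    have := congrArg norm h
    rw [hy, norm_smul, hx, Real.norm_eq_abs, mul_one] at this
    exact this.symm
  rcases abs_eq (by norm_num : (0:ℝ) ≤ 1) |>.mp hn with h' | h'
  · exact h1 (by rw [h, h', one_smul])
  · exact h2 (by rw [h, h', neg_one_smul])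

/-- Two closed antipodally symmetric curves on the unit
2-sphere must intersect: if `γ₁, γ₂` are continuous closed curves
(continuous `1`-periodic maps `ℝ → ℝ³`) tracing subsets `Γ₁, Γ₂` of the unit
sphere `S² ⊆ ℝ³` that are each closed under the antipodal map `x ↦ -x`,
then `Γ₁ ∩ Γ₂ ≠ ∅`. -/
theorem stmt_6 (γ₁ γ₂ : ℝ → EuclideanSpace ℝ (Fin 3))
    (hc₁ : Continuous γ₁) (hc₂ : Continuous γ₂)
    (hper₁ : Function.Periodic γ₁ 1) (hper₂ : Function.Periodic γ₂ 1)
    (hsph₁ : ∀ t, γ₁ t ∈ Metric.sphere (0 : EuclideanSpace ℝ (Fin 3)) 1)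
    (hsph₂ : ∀ t, γ₂ t ∈ Metric.sphere (0 : EuclideanSpace ℝ (Fin 3)) 1)
    (hant₁ : ∀ x ∈ Set.range γ₁, -x ∈ Set.range γ₁)
    (hant₂ : ∀ x ∈ Set.range γ₂, -x ∈ Set.range γ₂) :
    (Set.range γ₁ ∩ Set.range γ₂).Nonempty := by
  by_contra hne
  rw [Set.not_nonempty_iff_eq_empty] at hne
  have hdisj : ∀ s t : ℝ, γ₁ s ≠ γ₂ t := by
    intro s t h
    have : γ₁ s ∈ Set.range γ₁ ∩ Set.range γ₂ := ⟨⟨s, rfl⟩, ⟨t, h.symm⟩⟩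
    rw [hne] at this
    exact this
  have hn₁ : ∀ t, ‖γ₁ t‖ = 1 := fun t => by
    have := hsph₁ t; rwa [mem_sphere_zero_iff_norm] at this
  have hn₂ : ∀ t, ‖γ₂ t‖ = 1 := fun t => by
    have := hsph₂ t; rwa [mem_sphere_zero_iff_norm] at this
  -- find a point of the sphere not on Γ₁
  by_cases hc : ∃ c : E3, ‖c‖ = 1 ∧ c ∉ Set.range γ₁
  case neg =>
    push_neg at hc
    obtain ⟨s, hs⟩ := hc (γ₂ 0) (hn₂ 0)
    exact hdisj s 0 hs
  obtain ⟨c, hcn, hcr⟩ := hc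
  have hcr' : ∀ s : ℝ, c ≠ γ₁ s ∧ c ≠ -γ₁ s := by
    intro s
    constructor
    · intro h; exact hcr ⟨s, h.symm⟩
    · intro h
      apply hcr
      have := hant₁ (γ₁ s) ⟨s, rfl⟩
      rw [← h] at this
      exact this
  obtain ⟨t₁, ht₁⟩ : ∃ t, γ₁ t = -(γ₁ 0) := hant₁ (γ₁ 0) ⟨0, rfl⟩
  obtain ⟨t₂, ht₂⟩ : ∃ t, γ₂ t = -(γ₂ 0) := hant₂ (γ₂ 0) ⟨0, rfl⟩
  set A : ℝ → E3 := fun s => γ₁ (s * t₁) with hA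
  set B : ℝ → E3 := fun t => γ₂ (t * t₂) with hB
  have hAc : Continuous A := hc₁.comp (continuous_id.mul continuous_const)
  have hBc : Continuous B := hc₂.comp (continuous_id.mul continuous_const)
  have hAn : ∀ s, ‖A s‖ = 1 := fun s => hn₁ _
  have hBn : ∀ t, ‖B t‖ = 1 := fun t => hn₂ _
  have hAanti : A 1 = -(A 0) := by
    show γ₁ (1 * t₁) = -(γ₁ (0 * t₁))
    rw [one_mul, zero_mul, ht₁]
  have hBanti : B 1 = -(B 0) := by
    show γ₂ (1 * t₂) = -(γ₂ (0 * t₂))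
    rw [one_mul, zero_mul, ht₂]
  have hABne : ∀ s t : ℝ, B t ≠ A s ∧ B t ≠ -(A s) := by
    intro s t
    constructor
    · intro h; exact hdisj (s * t₁) (t * t₂) h.symm
    · intro h
      obtain ⟨r, hr⟩ := hant₂ (B t) ⟨t * t₂, rfl⟩
      apply hdisj (s * t₁) r
      show A s = γ₂ r
      rw [hr]
      show A s = -(B t)
      rw [h, neg_neg]
  have hcA : ∀ s : ℝ, c ≠ A s ∧ c ≠ -(A s) := fun s => hcr' (s * t₁)
  -- the moving frame and directions
  set v : ℝ → ℝ → E3 := fun s t => B t - ⟪B t, A s⟫ • A s with hv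
  set ef0 : ℝ → E3 := fun s => c - ⟪c, A s⟫ • A s with hef0
  have hv0 : ∀ s t, v s t ≠ 0 := fun s t =>
    sub_proj_ne_zero (hAn s) (hBn t) (hABne s t).1 (hABne s t).2
  have he0 : ∀ s, ef0 s ≠ 0 := fun s =>
    sub_proj_ne_zero (hAn s) hcn (hcA s).1 (hcA s).2
  set u : ℝ → ℝ → E3 := fun s t => ‖v s t‖⁻¹ • v s t with hu
  set ef : ℝ → E3 := fun s => ‖ef0 s‖⁻¹ • ef0 s with hef
  -- orthonormality facts
  have hxx : ∀ s, ⟪A s, A s⟫ = 1 := fun s => by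
    rw [real_inner_self_eq_norm_mul_norm, hAn s, mul_one]
  have hee : ∀ s, ⟪ef s, ef s⟫ = 1 := fun s => nz_inner_self (he0 s)
  have hxe : ∀ s, ⟪A s, ef s⟫ = 0 := by
    intro s
    show ⟪A s, ‖ef0 s‖⁻¹ • ef0 s⟫ = 0
    rw [real_inner_smul_right]
    have : ⟪A s, ef0 s⟫ = 0 := by
      show ⟪A s, c - ⟪c, A s⟫ • A s⟫ = 0
      rw [inner_sub_right, real_inner_smul_right, hxx s, real_inner_comm (A s) c]
      ring
    rw [this, mul_zero]
  have huu : ∀ s t, ⟪u s t, u s t⟫ = 1 := fun s t => nz_inner_self (hv0 s t)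
  have hux : ∀ s t, ⟪u s t, A s⟫ = 0 := by
    intro s t
    show ⟪‖v s t‖⁻¹ • v s t, A s⟫ = 0
    rw [real_inner_smul_left]
    have : ⟪v s t, A s⟫ = 0 := by
      show ⟪B t - ⟪B t, A s⟫ • A s, A s⟫ = 0
      rw [inner_sub_left, real_inner_smul_left, hxx s]
      ring
    rw [this, mul_zero]
  -- the circle-valued map
  set W : ℝ × ℝ → ℂ := fun p =>
    ((⟪u p.1 p.2, ef p.1⟫ : ℝ) : ℂ) +
      ((⟪u p.1 p.2, cross3 (A p.1) (ef p.1)⟫ : ℝ) : ℂ) * Complex.I with hW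
  have hpar : ∀ p : ℝ × ℝ,
      ⟪u p.1 p.2, ef p.1⟫ ^ 2 + ⟪u p.1 p.2, cross3 (A p.1) (ef p.1)⟫ ^ 2 = 1 := fun p =>
    parseval3 (A p.1) (ef p.1) (u p.1 p.2) (hxx p.1) (hee p.1) (hxe p.1) (huu p.1 p.2)
      (hux p.1 p.2)
  have hre : ∀ p : ℝ × ℝ, (W p).re = ⟪u p.1 p.2, ef p.1⟫ := by
    intro p; simp [hW]
  have him : ∀ p : ℝ × ℝ, (W p).im = ⟪u p.1 p.2, cross3 (A p.1) (ef p.1)⟫ := by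
    intro p; simp [hW]
  have habs : ∀ p, ‖W p‖ = 1 := by
    intro p
    have h2 : ‖W p‖ ^ 2 = 1 := by
      rw [Complex.sq_norm, Complex.normSq_apply, hre, him]
      have := hpar p
      nlinarith [this]
    nlinarith [norm_nonneg (W p), h2]
  -- continuity
  have hWc : Continuous W := by
    have hvc : Continuous fun p : ℝ × ℝ => v p.1 p.2 := by
      apply Continuous.sub (hBc.comp continuous_snd)
      exact ((hBc.comp continuous_snd).inner (𝕜 := ℝ) (hAc.comp continuous_fst)).smul
        (hAc.comp continuous_fst)
    have hvnc : Continuous fun p : ℝ × ℝ => ‖v p.1 p.2‖⁻¹ :=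
      (hvc.norm).inv₀ (fun p => norm_ne_zero_iff.mpr (hv0 p.1 p.2))
    have huc : Continuous fun p : ℝ × ℝ => u p.1 p.2 := hvnc.smul hvc
    have hefc0 : Continuous ef0 := by
      apply Continuous.sub continuous_const
      exact ((continuous_const.inner (𝕜 := ℝ) hAc).smul hAc)
    have hefc : Continuous ef :=
      ((hefc0.norm).inv₀ (fun s => norm_ne_zero_iff.mpr (he0 s))).smul hefc0
    have hcrc : Continuous fun p : ℝ × ℝ => cross3 (A p.1) (ef p.1) :=
      cross3_continuous (hAc.comp continuous_fst) (hefc.comp continuous_fst)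
    apply Continuous.add
    · exact Complex.continuous_ofReal.comp (huc.inner (𝕜 := ℝ) (hefc.comp continuous_fst))
    · exact (Complex.continuous_ofReal.comp (huc.inner (𝕜 := ℝ) hcrc)).mul continuous_const
  -- boundary conditions
  have htop : ∀ s : ℝ, W (s, 1) = - W (s, 0) := by
    intro s
    have hv1 : v s 1 = -(v s 0) := by
      show B 1 - ⟪B 1, A s⟫ • A s = -(B 0 - ⟪B 0, A s⟫ • A s)
      rw [hBanti, inner_neg_left]
      simp [neg_smul, sub_eq_add_neg]
      abel
    have hu1 : u s 1 = -(u s 0) := by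
      show ‖v s 1‖⁻¹ • v s 1 = -(‖v s 0‖⁻¹ • v s 0)
      rw [hv1, norm_neg, smul_neg]
    show ((⟪u s 1, ef s⟫ : ℝ) : ℂ) + ((⟪u s 1, cross3 (A s) (ef s)⟫ : ℝ) : ℂ) * Complex.I
      = -(((⟪u s 0, ef s⟫ : ℝ) : ℂ) + ((⟪u s 0, cross3 (A s) (ef s)⟫ : ℝ) : ℂ) * Complex.I)
    rw [hu1, inner_neg_left, inner_neg_left]
    push_cast
    ring
  have hside : ∀ t : ℝ, W (1, t) * W (0, t) = 1 := by
    intro t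
    have hv1 : v 1 t = v 0 t := by
      show B t - ⟪B t, A 1⟫ • A 1 = B t - ⟪B t, A 0⟫ • A 0
      rw [hAanti, inner_neg_right, neg_smul, smul_neg, neg_neg]
    have hu1 : u 1 t = u 0 t := by
      show ‖v 1 t‖⁻¹ • v 1 t = ‖v 0 t‖⁻¹ • v 0 t
      rw [hv1]
    have hef1 : ef 1 = ef 0 := by
      have h0 : ef0 1 = ef0 0 := by
        show c - ⟪c, A 1⟫ • A 1 = c - ⟪c, A 0⟫ • A 0
        rw [hAanti, inner_neg_right, neg_smul, smul_neg, neg_neg]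
      show ‖ef0 1‖⁻¹ • ef0 1 = ‖ef0 0‖⁻¹ • ef0 0
      rw [h0]
    have hcross : cross3 (A 1) (ef 1) = -(cross3 (A 0) (ef 0)) := by
      rw [hef1, hAanti, cross3_neg_left]
    have hWp : ∀ q r : ℝ,
        (((q:ℝ):ℂ) + ((r:ℝ):ℂ) * Complex.I) * (((q:ℝ):ℂ) + ((-r:ℝ):ℂ) * Complex.I)
          = ((q^2 + r^2 : ℝ) : ℂ) := by
      intro q r
      push_cast
      ring_nf
      rw [Complex.I_sq]
      ring
    show (((⟪u 1 t, ef 1⟫ : ℝ) : ℂ) + ((⟪u 1 t, cross3 (A 1) (ef 1)⟫ : ℝ) : ℂ) * Complex.I)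
      * (((⟪u 0 t, ef 0⟫ : ℝ) : ℂ) + ((⟪u 0 t, cross3 (A 0) (ef 0)⟫ : ℝ) : ℂ) * Complex.I) = 1
    rw [hcross, hu1, hef1, inner_neg_right]
    rw [show ∀ z w : ℂ, z * w = w * z from fun z w => mul_comm z w]
    rw [hWp ⟪u 0 t, ef 0⟫ ⟪u 0 t, cross3 (A 0) (ef 0)⟫]
    rw [show (1 : ℂ) = ((1 : ℝ) : ℂ) by norm_num]
    congr 1
    have := hpar (0, t)
    simpa using this
  exact (square_winding W hWc habs htop hside).elim
end

section
/- Let $H$ be a graph with $\mathrm{iocp}(H) \le i$ containing a family $\mathcal{P}$ of at least $n/\log^2 n$ vertex-disjoint odd cycles, where $n = |V(H)|$ is sufficiently large. Then $H$ has a vertex of degree at least $\frac{n}{2 i \log^5 n}$. -/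
open SimpleGraph Finset

lemma L4' (n:ℕ) (h : 16 ≤ n) : 4 ≤ Real.logb 2 n := by
  have h16 : ((16:ℕ):ℝ) ≤ (n:ℝ) := by exact_mod_cast h
  calc (4:ℝ) = Real.logb 2 ((2:ℝ)^(4:ℝ)) := by
        rw [Real.logb_rpow (by norm_num) (by norm_num)]
  _ ≤ Real.logb 2 n := by
      apply Real.logb_le_logb_of_le (by norm_num) (by positivity)
      rw [show ((2:ℝ)^(4:ℝ)) = 16 by
        rw [show (4:ℝ) = ((4:ℕ):ℝ) by norm_num, Real.rpow_natCast]; norm_num]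
      push_cast at h16 ⊢; linarith

lemma keybound' (c : ℝ) (hc : 0 ≤ c) (n : ℕ) (hn : (600*(c+1))^2 + 16 ≤ (n:ℝ)) :
    8*(c+1) ≤ (n:ℝ) / (Real.logb 2 n)^2 := by
  have hn1 : (1:ℝ) ≤ n := by nlinarith
  have hn0 : (0:ℝ) < n := by linarith
  have hlog : Real.log n ≤ 4 * (n:ℝ) ^ ((1:ℝ)/4) := by
    have := Real.log_le_rpow_div (le_of_lt hn0) (by norm_num : (0:ℝ) < 1/4)
    linarith [this]
  have hrp : ((n:ℝ) ^ ((1:ℝ)/4)) ^ 2 = (n:ℝ) ^ ((1:ℝ)/2) := by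
    rw [← Real.rpow_natCast ((n:ℝ) ^ ((1:ℝ)/4)) 2, ← Real.rpow_mul (le_of_lt hn0)]
    norm_num
  have hsqrt : (600*(c+1)) ≤ (n:ℝ) ^ ((1:ℝ)/2) := by
    rw [← Real.sqrt_eq_rpow]
    have : Real.sqrt ((600*(c+1))^2) ≤ Real.sqrt n := Real.sqrt_le_sqrt (by nlinarith)
    rwa [Real.sqrt_sq (by positivity)] at this
  have hlog2 : (0.6931471803:ℝ) < Real.log 2 := Real.log_two_gt_d9
  have hLdef : Real.logb 2 n = Real.log n / Real.log 2 := rfl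
  have hlogpos : 0 ≤ Real.log n := Real.log_nonneg hn1
  have hsn : (0:ℝ) ≤ (n:ℝ) ^ ((1:ℝ)/2) := Real.rpow_nonneg (le_of_lt hn0) _
  have hl22 : (0.48:ℝ) ≤ (Real.log 2)^2 := by nlinarith
  have hL2 : (Real.logb 2 n)^2 ≤ 34 * (n:ℝ) ^ ((1:ℝ)/2) := by
    rw [hLdef, div_pow, div_le_iff₀ (by positivity)]
    have h1 : (Real.log n)^2 ≤ 16 * (n:ℝ) ^ ((1:ℝ)/2) := by
      nlinarith [hrp, Real.rpow_nonneg (le_of_lt hn0) ((1:ℝ)/4)]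
    have h2 := mul_le_mul_of_nonneg_left hl22 (by positivity : (0:ℝ) ≤ 34 * (n:ℝ) ^ ((1:ℝ)/2))
    nlinarith
  have hL2pos : 0 < (Real.logb 2 n)^2 := by
    have := L4' n (by exact_mod_cast (by nlinarith : (16:ℝ) ≤ (n:ℝ)))
    nlinarith
  rw [le_div_iff₀ hL2pos]
  have hsq : (n:ℝ) ^ ((1:ℝ)/2) * (n:ℝ) ^ ((1:ℝ)/2) = n := by
    rw [← Real.rpow_add hn0]; norm_num
  nlinarith [hL2, hsqrt, mul_le_mul_of_nonneg_left hL2 (by linarith : (0:ℝ) ≤ 8*(c+1))]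


set_option maxHeartbeats 1000000

/-- **Lemma `lem:bigdegGen`.**
Let `H` be a graph with `iocp(H) ≤ i` (every collection of vertex-disjoint
odd cycles with no edges between distinct cycles has at most `i` members),
containing a family of at least `n / log² n` vertex-disjoint odd cycles,
where `n = |V(H)|` is sufficiently large.  Then `H` has a vertex of degree
at least `n / (2 i log⁵ n)` (logarithms base 2). -/
theorem stmt_10 (i : ℕ) :
    ∃ N : ℕ, ∀ (V : Type) (_ : Fintype V) (_ : DecidableEq V)
      (H : SimpleGraph V) (_ : DecidableRel H.Adj) (n : ℕ),
      n = Fintype.card V → N ≤ n →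
      -- `iocp(H) ≤ i`
      (∀ (m : ℕ) (g : Fin m → Σ v : V, H.Walk v v),
        (∀ a : Fin m, (g a).2.IsCycle ∧ Odd (g a).2.length) →
        (∀ a b : Fin m, a ≠ b →
          (∀ u ∈ (g a).2.support, u ∉ (g b).2.support) ∧
          (∀ u ∈ (g a).2.support, ∀ w ∈ (g b).2.support, ¬H.Adj u w)) →
        m ≤ i) →
      -- a family `𝒫` of at least `n / log² n` vertex-disjoint odd cycles
      ∀ (k : ℕ) (f : Fin k → Σ v : V, H.Walk v v),
        (n : ℝ) / (Real.logb 2 n) ^ 2 ≤ k →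
        (∀ m : Fin k, (f m).2.IsCycle ∧ Odd (f m).2.length) →
        (∀ m m' : Fin k, m ≠ m' → ∀ a ∈ (f m).2.support, a ∉ (f m').2.support) →
      ∃ v : V, (n : ℝ) / (2 * i * (Real.logb 2 n) ^ 5) ≤ H.degree v := by
  classical
  refine ⟨(600*(i+1))^2 + 16, ?_⟩
  intro V _ _ H _ n hn hN hiocp k f hk hcyc hdisj
  set L : ℝ := Real.logb 2 n with hLdef
  have hn16 : 16 ≤ n := le_trans (Nat.le_add_left 16 _) hN
  have hL4 : 4 ≤ L := L4' n hn16
  have hLpos : 0 < L := by linarith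
  have hnpos : (0:ℝ) < n := by exact_mod_cast lt_of_lt_of_le (by norm_num) hn16
  have hkey : 8*((i:ℝ)+1) ≤ (n:ℝ)/L^2 := by
    refine keybound' i (by positivity) n ?_
    have : (((600*(i+1))^2 + 16 : ℕ) : ℝ) ≤ (n:ℝ) := by exact_mod_cast hN
    push_cast at this ⊢
    linarith
  -- total length bound
  have hsublen : ∀ m : Fin k, ((f m).2.support.tail.toFinset).card = (f m).2.length := by
    intro m
    rw [List.toFinset_card_of_nodup (hcyc m).1.support_nodup, List.length_tail,
      SimpleGraph.Walk.length_support]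
    rfl
  have hsum : ∑ m : Fin k, (f m).2.length ≤ n := by
    rw [hn]
    calc ∑ m : Fin k, (f m).2.length
        = ∑ m : Fin k, ((f m).2.support.tail.toFinset).card :=
          Finset.sum_congr rfl fun m _ => (hsublen m).symm
      _ = (Finset.univ.biUnion fun m => (f m).2.support.tail.toFinset).card := by
          refine (Finset.card_biUnion ?_).symm
          intro x _ y _ hxy
          rw [Function.onFun, Finset.disjoint_left]
          intro a ha hb
          rw [List.mem_toFinset] at ha hb
          exact hdisj x y hxy a (List.mem_of_mem_tail ha) (List.mem_of_mem_tail hb)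
      _ ≤ Fintype.card V := Finset.card_le_univ _
  -- short and long cycles
  set short : Finset (Fin k) := Finset.univ.filter (fun m => ((f m).2.length : ℝ) ≤ L^3)
    with hshortdef
  set long : Finset (Fin k) := Finset.univ.filter (fun m => ¬ ((f m).2.length : ℝ) ≤ L^3)
    with hlongdef
  have hlongcard : (long.card : ℝ) * L^3 ≤ n := by
    have h1 : (long.card : ℝ) * L^3 ≤ ∑ m ∈ long, ((f m).2.length : ℝ) := by
      have := Finset.card_nsmul_le_sum long (fun m => ((f m).2.length : ℝ)) (L^3)
        (fun m hm => le_of_not_ge (Finset.mem_filter.mp hm).2)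
      rwa [nsmul_eq_mul] at this
    have h2 : ∑ m ∈ long, ((f m).2.length : ℝ) ≤ ∑ m : Fin k, ((f m).2.length : ℝ) :=
      Finset.sum_le_sum_of_subset_of_nonneg (Finset.subset_univ _)
        (fun m _ _ => by positivity)
    have h3 : ∑ m : Fin k, ((f m).2.length : ℝ) ≤ n := by exact_mod_cast hsum
    linarith
  have hpart : short.card + long.card = k := by
    rw [hshortdef, hlongdef, Finset.card_filter_add_card_filter_not]
    simp
  have hshortcard : (n:ℝ)/L^2 - (n:ℝ)/L^3 ≤ short.card := by
    have h1 : (long.card : ℝ) ≤ (n:ℝ)/L^3 := by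
      rw [le_div_iff₀ (by positivity)]; exact hlongcard
    have h2 : (short.card : ℝ) + long.card = k := by exact_mod_cast hpart
    linarith
  -- independent sets
  set Rel : Fin k → Fin k → Prop :=
    fun a b => ∃ u ∈ (f a).2.support, ∃ w ∈ (f b).2.support, H.Adj u w with hReldef
  set indepP : Finset (Fin k) → Prop :=
    fun S => ∀ a ∈ S, ∀ b ∈ S, a ≠ b → ¬ Rel a b with hindepdef
  have hne : (short.powerset.filter indepP).Nonempty :=
    ⟨∅, by simp [hindepdef]⟩
  obtain ⟨S, hSmem, hSmax⟩ := Finset.exists_max_image (short.powerset.filter indepP)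
    Finset.card hne
  rw [Finset.mem_filter, Finset.mem_powerset] at hSmem
  obtain ⟨hSsub, hSindep⟩ := hSmem
  -- S.card ≤ i
  have hSi : S.card ≤ i := by
    refine hiocp S.card (fun j => f ((S.orderIsoOfFin rfl) j).1) (fun a => hcyc _) ?_
    intro a b hab
    have hab' : ((S.orderIsoOfFin rfl) a).1 ≠ ((S.orderIsoOfFin rfl) b).1 := by
      intro h
      exact hab ((S.orderIsoOfFin rfl).injective (Subtype.ext h))
    refine ⟨hdisj _ _ hab', ?_⟩
    intro u hu w hw hadj
    exact hSindep _ ((S.orderIsoOfFin rfl) a).2 _ ((S.orderIsoOfFin rfl) b).2 hab'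
      ⟨u, hu, w, hw, hadj⟩
  -- short nonempty
  have hshortpos : 0 < short.card := by
    by_contra h
    push_neg at h
    interval_cases h' : short.card
    · have : (short.card : ℝ) = 0 := by rw [h']; norm_num
      have hlt : (n:ℝ)/L^3 < (n:ℝ)/L^2 := by
        apply div_lt_div_of_pos_left hnpos (by positivity)
        nlinarith
      linarith [hshortcard]

  -- S nonempty
  have hSpos : 0 < S.card := by
    obtain ⟨c, hc⟩ := Finset.card_pos.mp hshortpos
    by_contra h
    push_neg at h
    have hS0 : S.card = 0 := by omega
    have hmem : {c} ∈ short.powerset.filter indepP := by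
      rw [Finset.mem_filter, Finset.mem_powerset]
      refine ⟨Finset.singleton_subset_iff.mpr hc, ?_⟩
      intro a ha b hb hab
      rw [Finset.mem_singleton] at ha hb
      exact absurd (ha.trans hb.symm) hab
    have := hSmax _ hmem
    simp [hS0] at this
  have hi1 : 1 ≤ i := le_trans hSpos hSi
  -- maximality: every short cycle outside S is Rel-adjacent to S
  have hmaxadj : ∀ c ∈ short, c ∉ S → ∃ s₀ ∈ S, Rel s₀ c := by
    intro c hcshort hcS
    by_contra hno
    push_neg at hno
    have hmem : insert c S ∈ short.powerset.filter indepP := by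
      rw [Finset.mem_filter, Finset.mem_powerset]
      refine ⟨Finset.insert_subset hcshort hSsub, ?_⟩
      intro a ha b hb hab
      rw [Finset.mem_insert] at ha hb
      rcases ha with ha | ha <;> rcases hb with hb | hb
      · exact absurd (ha.trans hb.symm) hab
      · subst ha
        rintro ⟨u, hu, w, hw, hadj⟩
        exact hno b hb ⟨w, hw, u, hu, hadj.symm⟩
      · subst hb
        exact hno a ha
      · exact hSindep a ha b hb hab
    have := hSmax _ hmem
    rw [Finset.card_insert_of_notMem hcS] at this
    omega
  -- the vertex set T
  set T : Finset V := S.biUnion (fun m => (f m).2.support.toFinset) with hTdef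
  have hTcard : (T.card : ℝ) ≤ i * (L^3 + 1) := by
    have h1 : T.card ≤ ∑ m ∈ S, ((f m).2.support.toFinset).card := Finset.card_biUnion_le
    have h2 : ∑ m ∈ S, (((f m).2.support.toFinset).card : ℝ) ≤ ∑ m ∈ S, (L^3 + 1) := by
      refine Finset.sum_le_sum fun m hm => ?_
      have hlen : ((f m).2.length : ℝ) ≤ L^3 := (Finset.mem_filter.mp (hSsub hm)).2
      have h3 : ((f m).2.support.toFinset).card ≤ (f m).2.support.length :=
        List.toFinset_card_le _
      have h4 : (f m).2.support.length = (f m).2.length + 1 :=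
        SimpleGraph.Walk.length_support _
      have : (((f m).2.support.toFinset).card : ℝ) ≤ ((f m).2.length : ℝ) + 1 := by
        rw [h4] at h3; exact_mod_cast h3
      linarith
    have h5 : ∑ m ∈ S, ((L:ℝ)^3 + 1) = S.card * (L^3 + 1) := by
      rw [Finset.sum_const, nsmul_eq_mul]
    have h6 : (S.card : ℝ) ≤ i := by exact_mod_cast hSi
    have h1' : (T.card : ℝ) ≤ ∑ m ∈ S, (((f m).2.support.toFinset).card : ℝ) := by
      exact_mod_cast h1
    nlinarith [h1', h2, h5, h6, pow_pos hLpos 3]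
  have hTne : T.Nonempty := by
    obtain ⟨m, hm⟩ := Finset.card_pos.mp hSpos
    exact ⟨(f m).1, Finset.mem_biUnion.mpr ⟨m, hm,
      List.mem_toFinset.mpr (SimpleGraph.Walk.start_mem_support _)⟩⟩
  have hTpos : 0 < T.card := Finset.card_pos.mpr hTne
  haveI hVne : Nonempty V := by
    rw [← Fintype.card_pos_iff, ← hn]; omega
  -- the map φ
  have hex : ∀ c ∈ short \ S, ∃ u, u ∈ T ∧ ∃ w ∈ (f c).2.support, H.Adj u w := by
    intro c hc
    rw [Finset.mem_sdiff] at hc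
    obtain ⟨s₀, hs₀, u, hu, w, hw, hadj⟩ := hmaxadj c hc.1 hc.2
    exact ⟨u, Finset.mem_biUnion.mpr ⟨s₀, hs₀, List.mem_toFinset.mpr hu⟩, w, hw, hadj⟩
  set φ : Fin k → V := fun c =>
    if h : ∃ u, u ∈ T ∧ ∃ w ∈ (f c).2.support, H.Adj u w then h.choose
    else Classical.arbitrary V with hφdef
  have hφ : ∀ c ∈ short \ S, φ c ∈ T ∧ ∃ w ∈ (f c).2.support, H.Adj (φ c) w := by
    intro c hc
    have h := hex c hc
    simp only [hφdef, dif_pos h]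
    exact h.choose_spec
  have hfib : (short \ S).card = ∑ u ∈ T, ((short \ S).filter (fun c => φ c = u)).card :=
    Finset.card_eq_sum_card_fiberwise (fun c hc => (hφ c hc).1)
  -- pigeonhole: some u has a big fiber
  have hbig : ∃ u ∈ T, (((short \ S).card : ℝ)) / T.card ≤
      (((short \ S).filter (fun c => φ c = u)).card : ℝ) := by
    apply Finset.exists_le_of_sum_le hTne
    rw [Finset.sum_const, nsmul_eq_mul, mul_div_cancel₀]
    · exact_mod_cast hfib.le
    · exact_mod_cast hTpos.ne'
  obtain ⟨u, huT, hufib⟩ := hbig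
  refine ⟨u, ?_⟩
  -- degree bound
  set F : Finset (Fin k) := (short \ S).filter (fun c => φ c = u) with hFdef
  have hdeg : F.card ≤ H.degree u := by
    rw [← SimpleGraph.card_neighborFinset_eq_degree]
    set ψ : Fin k → V := fun c =>
      if h : ∃ w ∈ (f c).2.support, H.Adj u w then h.choose
      else Classical.arbitrary V with hψdef
    have hψ : ∀ c ∈ F, ψ c ∈ (f c).2.support ∧ H.Adj u (ψ c) := by
      intro c hc
      rw [hFdef, Finset.mem_filter] at hc
      have h : ∃ w ∈ (f c).2.support, H.Adj u w := by
        obtain ⟨w, hw, hadj⟩ := (hφ c hc.1).2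
        exact ⟨w, hw, hc.2 ▸ hadj⟩
      simp only [hψdef, dif_pos h]
      exact h.choose_spec
    refine Finset.card_le_card_of_injOn ψ (fun c hc =>
      (SimpleGraph.mem_neighborFinset _ _ _).mpr (hψ c hc).2) ?_
    intro c hc c' hc' heq
    by_contra hne2
    exact hdisj c c' hne2 (ψ c) (hψ c hc).1 (heq ▸ (hψ c' (by exact hc')).1)
  -- final arithmetic
  have hsdcard : ((short \ S).card : ℝ) = (short.card : ℝ) - S.card := by
    rw [Finset.card_sdiff_of_subset hSsub]
    have := Finset.card_le_card hSsub
    push_cast [Nat.cast_sub this]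
    ring
  have hipos : (0:ℝ) < i := by exact_mod_cast hi1
  have hSile : (S.card : ℝ) ≤ i := by exact_mod_cast hSi
  have hB : (0:ℝ) ≤ (n:ℝ)/L^2 := by positivity
  have h3div : (n:ℝ)/L^3 ≤ ((n:ℝ)/L^2)/4 := by
    have heq : (n:ℝ)/L^3 = ((n:ℝ)/L^2)/L := by
      rw [div_div, ← pow_succ]
    rw [heq]
    exact div_le_div_of_nonneg_left hB (by norm_num) hL4
  have h58 : (5/8) * ((n:ℝ)/L^2) ≤ (short.card : ℝ) - S.card := by
    have hile : (i:ℝ) ≤ ((n:ℝ)/L^2)/8 := by linarith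
    linarith [hshortcard, h3div, hSile]
  -- chain of inequalities
  have hchain1 : (n:ℝ) / (2 * i * L^5) ≤ (5/8) * ((n:ℝ)/L^2) / (i * (L^3+1)) := by
    rw [div_le_div_iff₀ (by positivity) (by positivity)]
    have hexp : (n:ℝ)/L^2 * L^5 = n * L^3 := by
      field_simp
    have hL3 : (64:ℝ) ≤ L^3 := by
      have := pow_le_pow_left₀ (by norm_num : (0:ℝ) ≤ 4) hL4 3
      norm_num at this
      linarith
    have hni : (0:ℝ) ≤ (n:ℝ) * i := by positivity
    have hh : (0:ℝ) ≤ (n:ℝ) * i * (L^3 - 64) := mul_nonneg hni (by linarith)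
    have key : (n:ℝ) * (i * (L^3+1)) ≤ 5/8 * (n * L^3) * (2*i) := by linarith
    calc (n:ℝ) * (i * (L^3+1)) ≤ 5/8 * (n * L^3) * (2*i) := key
      _ = 5/8 * ((n:ℝ)/L^2 * L^5) * (2*i) := by rw [hexp]
      _ = 5/8 * ((n:ℝ)/L^2) * (2 * i * L^5) := by ring
  have hchain2 : (5/8) * ((n:ℝ)/L^2) / (i * (L^3+1)) ≤ ((short.card : ℝ) - S.card) / T.card := by
    refine div_le_div₀ (by linarith [h58, hB]) h58 (by exact_mod_cast hTpos) hTcard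
  have hdeg' : (F.card : ℝ) ≤ H.degree u := by exact_mod_cast hdeg
  calc (n:ℝ) / (2 * i * L^5) ≤ (5/8) * ((n:ℝ)/L^2) / (i * (L^3+1)) := hchain1
    _ ≤ ((short.card : ℝ) - S.card) / T.card := hchain2
    _ = ((short \ S).card : ℝ) / T.card := by rw [hsdcard]
    _ ≤ (F.card : ℝ) := hufib
    _ ≤ H.degree u := hdeg'
end

section
/- Let $H$ be a graph whose shortest odd cycle has length $g$, let $C = v_1 \dots v_g$ be such a cycle, and let $u, w$ be two vertices at the same distance $k$ from $C$ with $2k + 1 < g$, such that shortest paths from $u$ and from $w$ to $C$ both end at the same vertex $v_\ell$ of $C$. Then $u$ and $w$ are non-adjacent. -/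
open SimpleGraph

private lemma aux_path_edge_length_one {V : Type*} {G : SimpleGraph V} {a b : V}
    (q : G.Walk a b) (hq : q.IsPath) (he : s(a, b) ∈ q.edges) : q.length = 1 := by
  cases q with
  | nil => simp at he
  | cons h r =>
    rename_i c
    rw [SimpleGraph.Walk.edges_cons, List.mem_cons] at he
    rcases he with he | he
    · have hbc : b = c := by
        rw [Sym2.eq_iff] at he
        rcases he with ⟨-, h2⟩ | ⟨h1, -⟩
        · exact h2
        · exact absurd h1 h.ne
      subst hbc
      cases r with
      | nil => simp
      | cons h' r' =>
        exfalso
        have hr : (SimpleGraph.Walk.cons h' r').IsPath := hq.of_cons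
        rw [SimpleGraph.Walk.cons_isPath_iff] at hr
        exact hr.2 r'.end_mem_support
    · exfalso
      rw [SimpleGraph.Walk.cons_isPath_iff] at hq
      exact hq.2 (SimpleGraph.Walk.fst_mem_support_of_mem_edges r he)

/-- A closed walk of odd length contains an odd cycle of length at most that
of the walk. -/
private lemma exists_odd_cycle_of_odd_closed_walk {V : Type*} {G : SimpleGraph V} :
    ∀ (n : ℕ) {u : V} (p : G.Walk u u), p.length = n → Odd n →
      ∃ (x : V) (c : G.Walk x x), c.IsCycle ∧ Odd c.length ∧ c.length ≤ n := by
  intro n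
  induction n using Nat.strong_induction_on with
  | _ n ih =>
    intro u p hlen hodd
    classical
    by_cases hnodup : p.support.tail.Nodup
    · -- with no repeated internal vertex, `p` is a cycle
      cases p with
      | nil =>
        exfalso
        simp only [SimpleGraph.Walk.length_nil] at hlen
        rw [← hlen, Nat.odd_iff] at hodd
        simp at hodd
      | cons h q =>
        rename_i y
        have hq : q.IsPath := by
          rw [SimpleGraph.Walk.isPath_def]
          simpa using hnodup
        by_cases he : s(u, y) ∈ q.edges
        · exfalso
          have := aux_path_edge_length_one q hq (by rwa [Sym2.eq_swap])
          rw [← hlen, SimpleGraph.Walk.length_cons, this, Nat.odd_iff] at hodd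
          simp at hodd
        · have hc : (SimpleGraph.Walk.cons h q).IsCycle := by
            rw [SimpleGraph.Walk.cons_isCycle_iff]
            exact ⟨hq, he⟩
          exact ⟨u, SimpleGraph.Walk.cons h q, hc, hlen ▸ hodd, hlen ▸ le_rfl⟩
    · -- a repeated internal vertex: rotate and split into two shorter closed walks
      obtain ⟨x, hxdup⟩ := List.exists_duplicate_iff_not_nodup.2 hnodup
      have hxcount : 2 ≤ p.support.tail.count x :=
        List.duplicate_iff_two_le_count.1 hxdup
      have hxmem : x ∈ p.support := by
        rw [SimpleGraph.Walk.support_eq_cons]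
        exact List.mem_cons_of_mem _ hxdup.mem
      set c := p.rotate x hxmem with hc
      have hclen : c.length = n := by
        have := (SimpleGraph.Walk.rotate_darts p x hxmem).perm.length_eq
        rwa [SimpleGraph.Walk.length_darts, SimpleGraph.Walk.length_darts, hlen] at this
      have hccount : 2 ≤ c.support.tail.count x := by
        have h2 := (SimpleGraph.Walk.support_rotate p x hxmem).perm.count_eq x
        rw [← hc] at h2
        omega
      cases hcc : c with
      | nil =>
        exfalso
        rw [hcc] at hclen
        simp only [SimpleGraph.Walk.length_nil] at hclen
        rw [← hclen, Nat.odd_iff] at hodd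
        simp at hodd
      | cons h' q' =>
        rename_i y
        have hqx : x ∈ q'.support := by
          have : c.support.tail = q'.support := by rw [hcc]; simp
          rw [this] at hccount
          exact List.count_pos_iff.1 (by omega)
        set c₁ : G.Walk x x := SimpleGraph.Walk.cons h' (q'.takeUntil x hqx) with hc₁
        set c₂ : G.Walk x x := q'.dropUntil x hqx with hc₂
        have hsum : c₁.length + c₂.length = n := by
          have hspec := congrArg SimpleGraph.Walk.length (q'.take_spec hqx)
          rw [SimpleGraph.Walk.length_append] at hspec
          have : q'.length + 1 = n := by
            rw [hcc] at hclen; simpa [Nat.add_comm] using hclen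
          simp only [hc₁, hc₂, SimpleGraph.Walk.length_cons]
          omega
        have hc₂pos : 0 < c₂.length := by
          by_contra h0
          have hc₂nil : c₂.length = 0 := by omega
          -- then q'.support = takeUntil.support, but x appears twice there
          have hsupp : q'.support = (q'.takeUntil x hqx).support ++ c₂.support.tail := by
            conv_lhs => rw [← q'.take_spec hqx]
            exact SimpleGraph.Walk.support_append _ _
          have htail : c₂.support.tail = [] := by
            have := SimpleGraph.Walk.length_support c₂
            have hlen2 : c₂.support.length = 1 := by omega
            cases hsup : c₂.support with
            | nil => simp [hsup] at hlen2
            | cons a l => rw [hsup] at hlen2; simp at hlen2; simp [hsup, hlen2]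
          have hcount1 : (q'.takeUntil x hqx).support.count x = 1 :=
            q'.count_support_takeUntil_eq_one hqx
          have : c.support.tail = q'.support := by rw [hcc]; simp
          rw [this, hsupp, htail, List.append_nil, hcount1] at hccount
          omega
        have hc₁pos : 0 < c₁.length := by simp [hc₁]
        have hc₁lt : c₁.length < n := by omega
        have hc₂lt : c₂.length < n := by omega
        have : Odd c₁.length ∨ Odd c₂.length := by
          simp only [Nat.odd_iff] at hodd ⊢
          omega
        rcases this with h1 | h2
        · obtain ⟨z, cz, hcz, hczodd, hczle⟩ := ih c₁.length hc₁lt c₁ rfl h1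
          exact ⟨z, cz, hcz, hczodd, hczle.trans hc₁lt.le⟩
        · obtain ⟨z, cz, hcz, hczodd, hczle⟩ := ih c₂.length hc₂lt c₂ rfl h2
          exact ⟨z, cz, hcz, hczodd, hczle.trans hc₂lt.le⟩

/-- Let `H` be a graph whose shortest odd cycle `C` has
length `g`, and let `u, w` be two vertices at the same distance `k` from `C`
with `2k + 1 < g`, such that shortest paths from `u` and from `w` to `C`
both end at the same vertex `vℓ` of `C`.  Then `u` and `w` are non-adjacent. -/
theorem stmt_13 {V : Type*} (H : SimpleGraph V)
    (v₀ : V) (C : H.Walk v₀ v₀) (hC : C.IsCycle) (hodd : Odd C.length)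
    (hmin : ∀ (u : V) (c' : H.Walk u u), c'.IsCycle → Odd c'.length →
      C.length ≤ c'.length)
    (u w vℓ : V) (k : ℕ) (hℓ : vℓ ∈ C.support)
    (hru : H.Reachable u vℓ) (hrw : H.Reachable w vℓ)
    (hdu : H.dist u vℓ = k) (hdw : H.dist w vℓ = k)
    (hku : ∀ a ∈ C.support, k ≤ H.dist u a)
    (hkw : ∀ a ∈ C.support, k ≤ H.dist w a)
    (hg : 2 * k + 1 < C.length) :
    ¬H.Adj u w := by
  intro hadj
  obtain ⟨pu, hpu⟩ := hru.exists_walk_length_eq_dist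
  obtain ⟨pw, hpw⟩ := hrw.exists_walk_length_eq_dist
  -- closed walk vℓ → u → w → vℓ of odd length 2k+1
  have hlen : (pu.reverse.append (SimpleGraph.Walk.cons hadj pw)).length = 2 * k + 1 := by
    rw [SimpleGraph.Walk.length_append, SimpleGraph.Walk.length_reverse,
      SimpleGraph.Walk.length_cons, hpu, hpw, hdu, hdw]
    ring
  obtain ⟨x, c, hcyc, hcodd, hcle⟩ :=
    exists_odd_cycle_of_odd_closed_walk (2 * k + 1)
      (pu.reverse.append (SimpleGraph.Walk.cons hadj pw)) hlen ⟨k, by ring⟩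
  have := hmin x c hcyc hcodd
  omega
end

section
/- Let $G$ be a graph with $n$ vertices $v_1,\dots,v_n$ and $m$ edges, and let $H$ be the 2-subdivision of $G$ (each edge $e = v_iv_j$ replaced by a path $v_i, v^+(e), v^-(e), v_j$). Then the independence number of $H$ equals $m + \alpha(G)$, and moreover there exists a maximum independent set of $H$ containing exactly one of $v^+(e), v^-(e)$ for every edge $e$, whose set of original vertices is an independent set of $G$. -/
open SimpleGraph Finset
open scoped Classical

lemma aux_bound {V E : Type*} [Fintype V] [Fintype E]
    (G : SimpleGraph V) (fst snd : E → V)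
    (hE2 : ∀ u v : V, G.Adj u v →
      ∃! e : E, (fst e = u ∧ snd e = v) ∨ (fst e = v ∧ snd e = u)) :
    ∀ A : Finset V,
      A.card ≤ Gᶜ.cliqueNum + (univ.filter (fun e => fst e ∈ A ∧ snd e ∈ A)).card := by
  intro A
  induction A using Finset.strongInduction with
  | _ A ih =>
    by_cases h : ∀ u ∈ A, ∀ v ∈ A, ¬G.Adj u v
    · have hc : Gᶜ.IsClique (A : Set V) := by
        intro u hu v hv huv
        rw [compl_adj]
        exact ⟨huv, h u hu v hv⟩
      have := SimpleGraph.IsClique.card_le_cliqueNum (tc := hc)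
      omega
    · push_neg at h
      obtain ⟨u, hu, v, hv, huv⟩ := h
      obtain ⟨e0, he0, -⟩ := hE2 u v huv
      set A' := A.erase u with hA'
      have hss : A' ⊂ A := Finset.erase_ssubset hu
      have h1 := ih A' hss
      have hcard : A'.card = A.card - 1 := Finset.card_erase_of_mem hu
      have he0mem : e0 ∈ univ.filter (fun e => fst e ∈ A ∧ snd e ∈ A) := by
        simp only [mem_filter, mem_univ, true_and]
        rcases he0 with ⟨h1, h2⟩ | ⟨h1, h2⟩ <;> simp [h1, h2, hu, hv]
      have hsub : univ.filter (fun e => fst e ∈ A' ∧ snd e ∈ A')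
          ⊆ (univ.filter (fun e => fst e ∈ A ∧ snd e ∈ A)).erase e0 := by
        intro e he
        simp only [mem_filter, mem_univ, true_and] at he
        rw [Finset.mem_erase]
        constructor
        · rintro rfl
          rcases he0 with ⟨h1, -⟩ | ⟨-, h2⟩
          · exact (Finset.ne_of_mem_erase he.1) h1
          · exact (Finset.ne_of_mem_erase he.2) h2
        · simp only [mem_filter, mem_univ, true_and]
          exact ⟨Finset.mem_of_mem_erase he.1, Finset.mem_of_mem_erase he.2⟩
      have h2 := Finset.card_le_card hsub
      rw [Finset.card_erase_of_mem he0mem] at h2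
      have h3 := Finset.card_pos.mpr ⟨e0, he0mem⟩
      have h4 : 0 < A.card := Finset.card_pos.mpr ⟨u, hu⟩
      omega


/-- Adjacency of the 2-subdivision of a graph whose edges are indexed by a
type `E` with endpoint maps `fst, snd : E → V`: each edge `e` is replaced by
the path `fst e, (e, true), (e, false), snd e`. -/
def subAdj {V E : Type*} (fst snd : E → V) :
    (V ⊕ E × Bool) → (V ⊕ E × Bool) → Prop
  | Sum.inl u, Sum.inr (e, b) => (b = true ∧ u = fst e) ∨ (b = false ∧ u = snd e)
  | Sum.inr (e, b), Sum.inl u => (b = true ∧ u = fst e) ∨ (b = false ∧ u = snd e)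
  | Sum.inr (e, b), Sum.inr (e', b') => e = e' ∧ b ≠ b'
  | Sum.inl _, Sum.inl _ => False

/-- The 2-subdivision of a graph, as a simple graph on `V ⊕ E × Bool`. -/
def twoSubdivision {V E : Type*} (fst snd : E → V) :
    SimpleGraph (V ⊕ E × Bool) where
  Adj := subAdj fst snd
  symm := ⟨by rintro (u | ⟨e, b⟩) (v | ⟨f, c⟩) h <;> simp_all [subAdj] <;> tauto⟩
  loopless := ⟨by rintro (u | ⟨e, b⟩) h <;> simp_all [subAdj]⟩

/-- Let `G` be a graph with `n` vertices and `m` edges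
(indexed by `E`, with each edge of `G` indexed exactly once), and let `H` be
the 2-subdivision of `G`.  Then `α(H) = m + α(G)`; moreover there is a
maximum independent set of `H` containing exactly one of `(e,true)`,
`(e,false)` for every edge `e`, whose set of original vertices is an
independent set of `G`.  (Independence numbers are expressed as clique
numbers of complements.) -/
theorem stmt_15 {V E : Type*} [Fintype V] [Fintype E] (G : SimpleGraph V)
    (fst snd : E → V)
    (hE1 : ∀ e, G.Adj (fst e) (snd e))
    (hE2 : ∀ u v : V, G.Adj u v →
      ∃! e : E, (fst e = u ∧ snd e = v) ∨ (fst e = v ∧ snd e = u)) :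
    (twoSubdivision fst snd)ᶜ.cliqueNum = Fintype.card E + Gᶜ.cliqueNum ∧
    ∃ S : Finset (V ⊕ E × Bool),
      (∀ a ∈ S, ∀ b ∈ S, a ≠ b → ¬(twoSubdivision fst snd).Adj a b) ∧
      S.card = Fintype.card E + Gᶜ.cliqueNum ∧
      (∀ e : E, (Sum.inr (e, true) ∈ S ↔ Sum.inr (e, false) ∉ S)) ∧
      (∀ u v : V, Sum.inl u ∈ S → Sum.inl v ∈ S → u ≠ v → ¬G.Adj u v) := by
  set H := twoSubdivision fst snd with hH
  obtain ⟨A, hAclique, hAcard⟩ := Gᶜ.exists_isNClique_cliqueNum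
  have hAind : ∀ u ∈ A, ∀ v ∈ A, u ≠ v → ¬G.Adj u v := by
    intro u hu v hv huv
    have := hAclique hu hv huv
    rw [compl_adj] at this
    exact this.2
  -- construction of S
  set S : Finset (V ⊕ E × Bool) :=
    A.image Sum.inl ∪
      univ.image (fun e => Sum.inr (e, if fst e ∈ A then false else true)) with hS
  have hmemL : ∀ u : V, Sum.inl u ∈ S ↔ u ∈ A := by
    intro u; simp [hS]
  have hmemR : ∀ (e : E) (b : Bool),
      Sum.inr (e, b) ∈ S ↔ b = (if fst e ∈ A then false else true) := by
    intro e b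
    simp only [hS, Finset.mem_union, Finset.mem_image, Finset.mem_univ, true_and]
    constructor
    · rintro (⟨u, -, h⟩ | ⟨e', h⟩)
      · exact absurd h (by simp)
      · have h' := Sum.inr.inj h
        rw [Prod.ext_iff] at h'
        obtain ⟨rfl, h2⟩ := h'
        exact h2.symm
    · rintro rfl; exact Or.inr ⟨e, rfl⟩
  have hSind : ∀ a ∈ S, ∀ b ∈ S, a ≠ b → ¬H.Adj a b := by
    rintro (u | ⟨e, b⟩) ha (v | ⟨e', b'⟩) hb hne hadj
    · exact hadj
    · rw [hmemL] at ha
      rw [hmemR] at hb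
      rcases hadj with ⟨rfl, h2⟩ | ⟨rfl, h2⟩
      · by_cases hf : fst e' ∈ A
        · simp [hf] at hb
        · exact hf (h2 ▸ ha)
      · by_cases hf : fst e' ∈ A
        · exact hAind _ hf _ (h2 ▸ ha) (G.ne_of_adj (hE1 e')) (hE1 e')
        · simp [hf] at hb
    · rw [hmemL] at hb
      rw [hmemR] at ha
      rcases hadj with ⟨rfl, h2⟩ | ⟨rfl, h2⟩
      · by_cases hf : fst e ∈ A
        · simp [hf] at ha
        · exact hf (h2 ▸ hb)
      · by_cases hf : fst e ∈ A
        · exact hAind _ hf _ (h2 ▸ hb) (G.ne_of_adj (hE1 e)) (hE1 e)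
        · simp [hf] at ha
    · rw [hmemR] at ha hb
      obtain ⟨rfl, hbb⟩ := hadj
      exact hbb (ha.trans hb.symm)
  have hScard : S.card = Fintype.card E + Gᶜ.cliqueNum := by
    rw [hS, Finset.card_union_of_disjoint, Finset.card_image_of_injective _ Sum.inl_injective,
      Finset.card_image_of_injective, hAcard, Finset.card_univ, Nat.add_comm]
    · intro e e' h
      exact (Prod.ext_iff.mp (Sum.inr.inj h)).1
    · rw [Finset.disjoint_left]
      rintro x hx hy
      simp only [Finset.mem_image] at hx hy
      obtain ⟨u, -, rfl⟩ := hx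
      obtain ⟨e, -, h⟩ := hy
      exact absurd h (by simp)
  -- upper bound
  have hub : Hᶜ.cliqueNum ≤ Fintype.card E + Gᶜ.cliqueNum := by
    obtain ⟨T, hTclique, hTcard⟩ := Hᶜ.exists_isNClique_cliqueNum
    have hTind : ∀ a ∈ T, ∀ b ∈ T, a ≠ b → ¬H.Adj a b := by
      intro a ha b hb hab
      have := hTclique ha hb hab
      rw [compl_adj] at this
      exact this.2
    set A' : Finset V := univ.filter (fun u => Sum.inl u ∈ T) with hA'
    set g : V ⊕ E × Bool → V ⊕ E := Sum.elim Sum.inl (fun p => Sum.inr p.1) with hg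
    have hinj : Set.InjOn g T := by
      rintro (u | ⟨e, b⟩) ha (v | ⟨e', b'⟩) hb h <;>
        simp only [hg, Sum.elim_inl, Sum.elim_inr] at h
      · simpa using h
      · exact absurd h (by simp)
      · exact absurd h (by simp)
      · have he : e = e' := by simpa using h
        subst he
        by_cases hbb : b = b'
        · simp [hbb]
        · exact absurd (show H.Adj (Sum.inr (e, b)) (Sum.inr (e, b')) from ⟨rfl, hbb⟩)
            (hTind _ (Finset.mem_coe.mp ha) _ (Finset.mem_coe.mp hb) (by simp [hbb]))
    have hcard1 : T.card = (T.image g).card := (Finset.card_image_of_injOn hinj).symm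
    have hsub : T.image g ⊆ A'.image Sum.inl ∪
        (univ.filter (fun e => ¬(fst e ∈ A' ∧ snd e ∈ A'))).image Sum.inr := by
      intro x hx
      obtain ⟨a, ha, rfl⟩ := Finset.mem_image.mp hx
      rcases a with u | ⟨e, b⟩
      · apply Finset.mem_union_left
        exact Finset.mem_image.mpr ⟨u, by simp [hA', ha], rfl⟩
      · apply Finset.mem_union_right
        refine Finset.mem_image.mpr ⟨e, ?_, rfl⟩
        simp only [Finset.mem_filter, Finset.mem_univ, true_and, hA']
        rintro ⟨h1, h2⟩
        cases b
        · exact hTind _ ha _ h2 (by simp) (Or.inr ⟨rfl, rfl⟩)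
        · exact hTind _ ha _ h1 (by simp) (Or.inl ⟨rfl, rfl⟩)
    have hcard2 := Finset.card_le_card hsub
    rw [Finset.card_union_of_disjoint, Finset.card_image_of_injective _ Sum.inl_injective,
      Finset.card_image_of_injective _ Sum.inr_injective] at hcard2
    · have hb1 := aux_bound G fst snd hE2 A'
      have hb2 := Finset.card_filter_add_card_filter_not
        (s := (univ : Finset E)) (p := fun e => fst e ∈ A' ∧ snd e ∈ A')
      rw [Finset.card_univ] at hb2
      omega
    · rw [Finset.disjoint_left]
      rintro x hx hy
      simp only [Finset.mem_image] at hx hy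
      obtain ⟨u, -, rfl⟩ := hx
      obtain ⟨e, -, h⟩ := hy
      exact absurd h (by simp)
  have hSclique : Hᶜ.IsClique (S : Set (V ⊕ E × Bool)) := by
    intro a ha b hb hab
    rw [compl_adj]
    exact ⟨hab, hSind a ha b hb hab⟩
  have hlb : Fintype.card E + Gᶜ.cliqueNum ≤ Hᶜ.cliqueNum := by
    have := SimpleGraph.IsClique.card_le_cliqueNum (tc := hSclique)
    omega
  refine ⟨le_antisymm hub hlb, S, hSind, hScard, ?_, ?_⟩
  · intro e
    rw [hmemR, hmemR]
    by_cases hf : fst e ∈ A <;> simp [hf]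
  · intro u v hu hv huv
    rw [hmemL] at hu hv
    exact hAind u hu v hv huv
end

section
/- Every graph is the intersection graph of closed balls of radius 1 in $\mathbb{R}^4$ after co-2-subdivision: for every finite simple graph $G$, there exists a set of points in $\mathbb{R}^4$ (one per vertex of the 2-subdivision of $G$) such that two points are at distance at most $2$ if and only if the corresponding vertices are adjacent in the complement of the 2-subdivision of $G$. -/
open SimpleGraph

noncomputable section AuxUBG17

private def aa1 (x : ℝ) : ℝ := (1 - x^2)/(1+x^2)
private def aa2 (x : ℝ) : ℝ := 2*x/(1+x^2)
private def dd (x y : ℝ) : ℝ := 2*(x-y)^2/((1+x^2)*(1+y^2))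

private lemma aux_unit (x : ℝ) : aa1 x ^2 + aa2 x ^2 = 1 := by
  have h : (1:ℝ)+x^2 ≠ 0 := by positivity
  unfold aa1 aa2
  field_simp
  ring

private lemma aux_key (α β x y : ℝ) :
    (α * aa1 x - β * aa1 y)^2 + (α * aa2 x - β * aa2 y)^2
      = α^2 + β^2 - 2*α*β*(1 - dd x y) := by
  have hx : (1:ℝ)+x^2 ≠ 0 := by positivity
  have hy : (1:ℝ)+y^2 ≠ 0 := by positivity
  unfold aa1 aa2 dd
  field_simp
  ring

private lemma dd_nonneg (x y : ℝ) : 0 ≤ dd x y := by unfold dd; positivity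

private lemma dd_self (x : ℝ) : dd x x = 0 := by simp [dd]

private lemma dd_le (x y : ℝ) : dd x y ≤ 2*(x-y)^2 := by
  unfold dd
  rw [div_le_iff₀ (by positivity)]
  nlinarith [sq_nonneg (x-y), sq_nonneg x, sq_nonneg y,
    mul_nonneg (sq_nonneg x) (sq_nonneg y)]

private lemma le_dd {x y : ℝ} (hx0 : 0 ≤ x) (hx1 : x ≤ 1) (hy0 : 0 ≤ y) (hy1 : y ≤ 1) :
    (x-y)^2/2 ≤ dd x y := by
  unfold dd
  rw [div_le_div_iff₀ (by norm_num) (by positivity)]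
  have hx2 : x^2 ≤ 1 := by nlinarith
  have hy2 : y^2 ≤ 1 := by nlinarith
  have hD : (1+x^2)*(1+y^2) ≤ 4 := by nlinarith
  nlinarith [mul_le_mul_of_nonneg_left hD (sq_nonneg (x-y))]

private lemma dist_le_two_iff (p q : EuclideanSpace ℝ (Fin 4)) :
    dist p q ≤ 2 ↔
      (p 0 - q 0)^2 + (p 1 - q 1)^2 + (p 2 - q 2)^2 + (p 3 - q 3)^2 ≤ 4 := by
  rw [EuclideanSpace.dist_eq, Fin.sum_univ_four]
  simp only [Real.dist_eq, sq_abs]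
  rw [show (2:ℝ) = Real.sqrt 4 by
    rw [show (4:ℝ) = 2^2 by norm_num, Real.sqrt_sq (by norm_num)]]
  exact Real.sqrt_le_sqrt_iff (by norm_num)


private lemma calcA (A B D1 t1 t2 : ℝ) (hk : A + B = 2*D1)
    (hD1l : D1 ≤ 2*(t1-t2)^2) (hΔ : (t1-t2)^2 ≤ 1) :
    A + B + (0-0)^2 + (0-0)^2 ≤ 4 := by nlinarith

private lemma calcVE_far (A B C D R s ε σ : ℝ)
    (hk : A + B = 1 + R^2 + 2*R*(1-0)) (hCD : C + D = s^2)
    (hs2 : s^2 = 1+ε) (hRs : (1+R)^2 = 3-ε+σ^2/4) (hσsq : 0 < σ^2) :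
    ¬ (A + B + C + D ≤ 4) := by intro h; nlinarith

private lemma calcVE_near (A B C D R s ε σ D1 : ℝ)
    (hk : A + B = 1 + R^2 + 2*R*(1-D1)) (hCD : C + D = s^2)
    (hs2 : s^2 = 1+ε) (hRs : (1+R)^2 = 3-ε+σ^2/4)
    (hprod : 0 ≤ (R-1/4)*D1) (hD1 : σ^2/2 ≤ D1) :
    A + B + C + D ≤ 4 := by nlinarith

private lemma calcSame (A B C D R s D1 D2 : ℝ)
    (hk1 : A + B = 2*R^2*D1) (hk2 : C + D = 2*s^2*D2)
    (hrd : 0 ≤ (1-R^2)*D1) (hsd : 0 ≤ (2-s^2)*D2)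
    (hD1n : 0 ≤ D1) (hD2n : 0 ≤ D2) (hD1l : D1 ≤ 1/32) (hD2l : D2 ≤ 1/2) :
    A + B + C + D ≤ 4 := by nlinarith

private lemma calcOpp_far (A B C D R s ε D1 : ℝ)
    (hk1 : A + B = 2*R^2*D1) (hk2 : C + D = 4*s^2 - 2*s^2*0)
    (hs2 : s^2 = 1+ε) (hε : 0 < ε) (hRD : 0 ≤ R^2*D1) :
    ¬ (A + B + C + D ≤ 4) := by intro h; nlinarith

private lemma calcOpp_near (A B C D R s ε ρ D1 D2 : ℝ)
    (hk1 : A + B = 2*R^2*D1) (hk2 : C + D = 4*s^2 - 2*s^2*D2)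
    (hs2 : s^2 = 1+ε) (hεle : 4*ε ≤ ρ^2/2)
    (hsd : 0 ≤ (s^2-1)*D2) (hD2 : ρ^2/2 ≤ D2)
    (hrd : 0 ≤ (1-R^2)*D1) (hD1n : 0 ≤ D1) (hD1 : D1 ≤ ρ^2/8) :
    A + B + C + D ≤ 4 := by nlinarith

set_option maxHeartbeats 1000000 in
private lemma build {V E : Type} (fst snd : E → V) (tv : V → ℝ) (we : E → ℝ) (σ ρ : ℝ)
    (hσ : 0 < σ) (hρ : 0 < ρ) (hρ2 : ρ ≤ 1/2) (hσρ : σ ≤ ρ/4)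
    (htv0 : ∀ u, 0 ≤ tv u) (htv1 : ∀ u, tv u ≤ ρ/4)
    (htvg : ∀ u v : V, u ≠ v → σ^2 ≤ (tv u - tv v)^2)
    (hwe0 : ∀ e, 0 ≤ we e) (hwe1 : ∀ e, we e ≤ 1/2)
    (hweg : ∀ e f : E, e ≠ f → ρ^2 ≤ (we e - we f)^2) :
    ∃ c : V ⊕ E × Bool → EuclideanSpace ℝ (Fin 4),
      ∀ x y : V ⊕ E × Bool, x ≠ y →
        (dist (c x) (c y) ≤ 2 ↔ (twoSubdivision fst snd)ᶜ.Adj x y) := by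
  classical
  obtain ⟨ε, hεdef⟩ : ∃ x : ℝ, x = ρ^2/8 := ⟨_, rfl⟩
  have hε : 0 < ε := by rw [hεdef]; positivity
  have hε2 : ε ≤ 1/32 := by rw [hεdef]; nlinarith
  have hσ1 : σ ≤ 1/8 := by linarith
  have hσsq : 0 < σ^2 := by positivity
  have hδ : σ^2/4 ≤ 1/256 := by nlinarith
  obtain ⟨s, hs2⟩ : ∃ t : ℝ, t^2 = 1 + ε := ⟨Real.sqrt (1+ε), Real.sq_sqrt (by linarith)⟩
  have hs1 : 1 ≤ s^2 := by rw [hs2]; linarith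
  have hsle : s^2 ≤ 2 := by rw [hs2]; linarith
  obtain ⟨R, hRs, h1R⟩ : ∃ r : ℝ, (1+r)^2 = 3 - ε + σ^2/4 ∧ 0 ≤ 1 + r := by
    refine ⟨Real.sqrt (3 - ε + σ^2/4) - 1, ?_, ?_⟩
    · rw [show 1 + (Real.sqrt (3 - ε + σ^2/4) - 1) = Real.sqrt (3 - ε + σ^2/4) by ring,
        Real.sq_sqrt (by nlinarith)]
    · have := Real.sqrt_nonneg (3 - ε + σ^2/4); linarith
  have hR4 : 1/4 ≤ R := by
    by_contra hcon
    push_neg at hcon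
    have h5 : 1 + R ≤ 5/4 := by linarith
    have hsq : (1+R)*(1+R) ≤ (5/4)*(5/4) := mul_le_mul h5 h5 h1R (by norm_num)
    nlinarith [hRs, hσsq]
  have hR1 : R ≤ 1 := by
    by_contra hcon
    push_neg at hcon
    have h5 : (2:ℝ) ≤ 1 + R := by linarith
    have hsq : (2:ℝ)*2 ≤ (1+R)*(1+R) := mul_le_mul h5 h5 (by norm_num) (by linarith)
    nlinarith [hRs]
  have hR2 : R^2 ≤ 1 := by
    nlinarith [mul_nonneg (by linarith : (0:ℝ) ≤ 1 - R) (by linarith : (0:ℝ) ≤ 1 + R)]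
  -- the points
  refine ⟨fun z => match z with
    | Sum.inl u => (WithLp.toLp 2 ![aa1 (tv u), aa2 (tv u), 0, 0] : EuclideanSpace ℝ (Fin 4))
    | Sum.inr (e, b) =>
        (WithLp.toLp 2 ![-R * aa1 (tv (if b then fst e else snd e)),
           -R * aa2 (tv (if b then fst e else snd e)),
           (if b then s else -s) * aa1 (we e),
           (if b then s else -s) * aa2 (we e)] : EuclideanSpace ℝ (Fin 4)), ?_⟩
  have hcompl : ∀ x y : V ⊕ E × Bool,
      (twoSubdivision fst snd)ᶜ.Adj x y ↔ x ≠ y ∧ ¬ subAdj fst snd x y := by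
    intro x y; rw [SimpleGraph.compl_adj]; rfl
  -- generic vertex-vs-edge-point step
  have vertEdge : ∀ (u x : V) (e : E),
      ((aa1 (tv u) - -R * aa1 (tv x))^2 + (aa2 (tv u) - -R * aa2 (tv x))^2
        + (0 - s * aa1 (we e))^2 + (0 - s * aa2 (we e))^2 ≤ 4 ↔ u ≠ x) ∧
      ((aa1 (tv u) - -R * aa1 (tv x))^2 + (aa2 (tv u) - -R * aa2 (tv x))^2
        + (0 - -s * aa1 (we e))^2 + (0 - -s * aa2 (we e))^2 ≤ 4 ↔ u ≠ x) := by
    intro u x e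
    have hk : (aa1 (tv u) - -R * aa1 (tv x))^2 + (aa2 (tv u) - -R * aa2 (tv x))^2
        = 1 + R^2 + 2*R*(1 - dd (tv u) (tv x)) := by
      linear_combination aux_key 1 (-R) (tv u) (tv x)
    have hk2 : (0 - s * aa1 (we e))^2 + (0 - s * aa2 (we e))^2 = s^2 := by
      linear_combination (s:ℝ)^2 * aux_unit (we e)
    have hk2' : (0 - -s * aa1 (we e))^2 + (0 - -s * aa2 (we e))^2 = s^2 := by
      linear_combination (s:ℝ)^2 * aux_unit (we e)
    have hstep : ∀ C D : ℝ, C + D = s^2 →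
        ((aa1 (tv u) - -R * aa1 (tv x))^2 + (aa2 (tv u) - -R * aa2 (tv x))^2
          + C + D ≤ 4 ↔ u ≠ x) := by
      intro C D hCD
      constructor
      · intro h
        intro huv
        subst huv
        have hk0 : (aa1 (tv u) - -R * aa1 (tv u))^2 + (aa2 (tv u) - -R * aa2 (tv u))^2
            = 1 + R^2 + 2*R*(1-0) := by
          have h0 := dd_self (tv u)
          linear_combination (aux_key 1 (-R) (tv u) (tv u)) - 2*R*h0
        exact calcVE_far _ _ C D R s ε σ hk0 hCD hs2 hRs hσsq h
      · intro hux
        have hgap := htvg u x hux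
        have hddl := le_dd (htv0 u) (by linarith [htv1 u]) (htv0 x) (by linarith [htv1 x])
        have hprod : 0 ≤ (R - 1/4) * dd (tv u) (tv x) :=
          mul_nonneg (by linarith) (dd_nonneg _ _)
        exact calcVE_near _ _ C D R s ε σ (dd (tv u) (tv x)) hk hCD hs2 hRs hprod
          (by linarith)
    exact ⟨hstep _ _ hk2, hstep _ _ hk2'⟩
  -- generic edge-point-vs-edge-point, same side
  have sameSide : ∀ (x x' : V) (e f : E) (ς : ℝ), ς^2 = s^2 →
      (-R * aa1 (tv x) - -R * aa1 (tv x'))^2 + (-R * aa2 (tv x) - -R * aa2 (tv x'))^2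
        + (ς * aa1 (we e) - ς * aa1 (we f))^2 + (ς * aa2 (we e) - ς * aa2 (we f))^2 ≤ 4 := by
    intro x x' e f ς hς
    have hk1 : (-R * aa1 (tv x) - -R * aa1 (tv x'))^2 + (-R * aa2 (tv x) - -R * aa2 (tv x'))^2
        = 2*R^2 * dd (tv x) (tv x') := by
      linear_combination aux_key (-R) (-R) (tv x) (tv x')
    have hk2 : (ς * aa1 (we e) - ς * aa1 (we f))^2 + (ς * aa2 (we e) - ς * aa2 (we f))^2
        = 2*s^2 * dd (we e) (we f) := by
      linear_combination (aux_key ς ς (we e) (we f)) + 2 * (dd (we e) (we f)) * hς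
    have hΔt : (tv x - tv x')^2 ≤ 1/64 := by
      have h1 : (tv x - tv x')^2 ≤ (ρ/4)^2 :=
        sq_le_sq' (by linarith [htv0 x, htv1 x']) (by linarith [htv0 x', htv1 x])
      nlinarith [h1]
    have hΔw : (we e - we f)^2 ≤ 1/4 := by
      have h1 : (we e - we f)^2 ≤ (1/2:ℝ)^2 :=
        sq_le_sq' (by linarith [hwe0 e, hwe1 f]) (by linarith [hwe0 f, hwe1 e])
      nlinarith [h1]
    have hrd : 0 ≤ (1 - R^2) * dd (tv x) (tv x') :=
      mul_nonneg (by linarith) (dd_nonneg _ _)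
    have hsd : 0 ≤ (2 - s^2) * dd (we e) (we f) :=
      mul_nonneg (by linarith) (dd_nonneg _ _)
    exact calcSame _ _ _ _ R s (dd (tv x) (tv x')) (dd (we e) (we f)) hk1 hk2 hrd hsd
      (dd_nonneg _ _) (dd_nonneg _ _)
      (by linarith [dd_le (tv x) (tv x')])
      (by linarith [dd_le (we e) (we f)])
  -- generic edge-point-vs-edge-point, opposite sides
  have oppSide : ∀ (x x' : V) (e f : E) (ς ς' : ℝ), ς^2 = s^2 → ς' = -ς →
      ((-R * aa1 (tv x) - -R * aa1 (tv x'))^2 + (-R * aa2 (tv x) - -R * aa2 (tv x'))^2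
        + (ς * aa1 (we e) - ς' * aa1 (we f))^2 + (ς * aa2 (we e) - ς' * aa2 (we f))^2 ≤ 4
        ↔ e ≠ f) := by
    intro x x' e f ς ς' hς hς'
    subst hς'
    have hk1 : (-R * aa1 (tv x) - -R * aa1 (tv x'))^2 + (-R * aa2 (tv x) - -R * aa2 (tv x'))^2
        = 2*R^2 * dd (tv x) (tv x') := by
      linear_combination aux_key (-R) (-R) (tv x) (tv x')
    have hk2 : (ς * aa1 (we e) - -ς * aa1 (we f))^2 + (ς * aa2 (we e) - -ς * aa2 (we f))^2
        = 4*s^2 - 2*s^2 * dd (we e) (we f) := by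
      linear_combination (aux_key ς (-ς) (we e) (we f)) + (4 - 2 * (dd (we e) (we f))) * hς
    have hD1n := dd_nonneg (tv x) (tv x')
    constructor
    · intro hle
      intro hef
      subst hef
      rw [dd_self] at hk2
      exact calcOpp_far _ _ _ _ R s ε (dd (tv x) (tv x')) hk1 (by linarith [hk2]) hs2 hε
        (mul_nonneg (sq_nonneg R) hD1n) hle
    · intro hef
      have hgap := hweg e f hef
      have hddl := le_dd (hwe0 e) (by linarith [hwe1 e]) (hwe0 f) (by linarith [hwe1 f])
      have hsd : 0 ≤ (s^2 - 1) * dd (we e) (we f) :=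
        mul_nonneg (by linarith) (dd_nonneg _ _)
      have hΔt : (tv x - tv x')^2 ≤ ρ^2/16 := by
        have h1 : (tv x - tv x')^2 ≤ (ρ/4)^2 :=
          sq_le_sq' (by linarith [htv0 x, htv1 x']) (by linarith [htv0 x', htv1 x])
        nlinarith [h1]
      have hrd : 0 ≤ (1 - R^2) * dd (tv x) (tv x') :=
        mul_nonneg (by linarith) hD1n
      exact calcOpp_near _ _ _ _ R s ε ρ (dd (tv x) (tv x')) (dd (we e) (we f)) hk1 hk2 hs2
        (by rw [hεdef]; linarith) hsd (by linarith) hrd hD1n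
        (by linarith [dd_le (tv x) (tv x')])
  rintro (u | ⟨e, b⟩) (v | ⟨f, b'⟩) hxy
  · -- vertex / vertex
    rw [dist_le_two_iff, hcompl]
    simp only [Matrix.cons_val_zero, Matrix.cons_val_one, Matrix.head_cons,
      Matrix.cons_val_two, Matrix.cons_val_three, Matrix.cons_val_succ,
      Matrix.vecTail, Matrix.vecHead, Function.comp_apply, PiLp.toLp_apply, WithLp.ofLp_toLp]
    have hk : (aa1 (tv u) - aa1 (tv v))^2 + (aa2 (tv u) - aa2 (tv v))^2
        = 2 * dd (tv u) (tv v) := by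
      linear_combination aux_key 1 1 (tv u) (tv v)
    have hΔ : (tv u - tv v)^2 ≤ 1 := by
      have h1 : (tv u - tv v)^2 ≤ (ρ/4)^2 :=
        sq_le_sq' (by linarith [htv0 u, htv1 v]) (by linarith [htv0 v, htv1 u])
      nlinarith [h1]
    constructor
    · intro _; exact ⟨hxy, by simp [subAdj]⟩
    · intro _
      exact calcA _ _ (dd (tv u) (tv v)) (tv u) (tv v) hk (dd_le (tv u) (tv v)) hΔ
  · -- vertex / edge-point
    rw [dist_le_two_iff, hcompl]
    cases b' <;>
      simp only [Matrix.cons_val_zero, Matrix.cons_val_one, Matrix.head_cons,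
        Matrix.cons_val_two, Matrix.cons_val_three, Matrix.cons_val_succ,
        Matrix.vecTail, Matrix.vecHead, Function.comp_apply, ↓reduceIte,
        Bool.false_eq_true, if_false, PiLp.toLp_apply, WithLp.ofLp_toLp]
    · rw [(vertEdge u (snd f) f).2]
      constructor
      · intro h; exact ⟨hxy, by simp [subAdj, h]⟩
      · rintro ⟨-, hna⟩ rfl; exact hna (by simp [subAdj])
    · rw [(vertEdge u (fst f) f).1]
      constructor
      · intro h; exact ⟨hxy, by simp [subAdj, h]⟩
      · rintro ⟨-, hna⟩ rfl; exact hna (by simp [subAdj])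
  · -- edge-point / vertex
    rw [_root_.dist_comm, dist_le_two_iff, hcompl]
    cases b <;>
      simp only [Matrix.cons_val_zero, Matrix.cons_val_one, Matrix.head_cons,
        Matrix.cons_val_two, Matrix.cons_val_three, Matrix.cons_val_succ,
        Matrix.vecTail, Matrix.vecHead, Function.comp_apply, ↓reduceIte,
        Bool.false_eq_true, if_false, PiLp.toLp_apply, WithLp.ofLp_toLp]
    · rw [(vertEdge v (snd e) e).2]
      constructor
      · intro h; exact ⟨hxy, by simp [subAdj, h]⟩
      · rintro ⟨-, hna⟩ rfl; exact hna (by simp [subAdj])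
    · rw [(vertEdge v (fst e) e).1]
      constructor
      · intro h; exact ⟨hxy, by simp [subAdj, h]⟩
      · rintro ⟨-, hna⟩ rfl; exact hna (by simp [subAdj])
  · -- edge-point / edge-point
    rw [dist_le_two_iff, hcompl]
    have hss : s^2 = s^2 := rfl
    have hns : (-s)^2 = s^2 := by ring
    cases b <;> cases b' <;>
      simp only [Matrix.cons_val_zero, Matrix.cons_val_one, Matrix.head_cons,
        Matrix.cons_val_two, Matrix.cons_val_three, Matrix.cons_val_succ,
        Matrix.vecTail, Matrix.vecHead, Function.comp_apply, ↓reduceIte,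
        Bool.false_eq_true, if_false, PiLp.toLp_apply, WithLp.ofLp_toLp]
    · -- false / false : same side
      have hef : e ≠ f := fun h => hxy (by rw [h])
      constructor
      · intro _
        exact ⟨hxy, by simp only [subAdj]; rintro ⟨rfl, h2⟩; exact h2 rfl⟩
      · intro _
        exact sameSide (snd e) (snd f) e f (-s) hns
    · -- false / true : opposite sides
      have key := oppSide (snd e) (fst f) e f (-s) s hns (by ring)
      constructor
      · intro hle
        refine ⟨hxy, ?_⟩
        simp only [subAdj]
        rintro ⟨rfl, -⟩
        exact (key.mp (by linarith [hle])) rfl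
      · rintro ⟨-, hna⟩
        refine (key.mpr ?_)
        rintro rfl
        exact hna (by simp [subAdj])
    · -- true / false : opposite sides
      have key := oppSide (fst e) (snd f) e f s (-s) hss (by ring)
      constructor
      · intro hle
        refine ⟨hxy, ?_⟩
        simp only [subAdj]
        rintro ⟨rfl, -⟩
        exact (key.mp (by linarith [hle])) rfl
      · rintro ⟨-, hna⟩
        refine (key.mpr ?_)
        rintro rfl
        exact hna (by simp [subAdj])
    · -- true / true : same side
      constructor
      · intro _
        exact ⟨hxy, by simp only [subAdj]; rintro ⟨rfl, h2⟩; exact h2 rfl⟩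
      · intro _
        exact sameSide (fst e) (fst f) e f s hss


private lemma nat_gap {a b : ℕ} (h : a ≠ b) : (1:ℝ) ≤ ((a:ℝ) - (b:ℝ))^2 := by
  have h1 : (1:ℤ) ≤ |(a:ℤ) - (b:ℤ)| :=
    Int.one_le_abs (sub_ne_zero.mpr (by exact_mod_cast h))
  have h2 : (1:ℝ) ≤ |(a:ℝ) - (b:ℝ)| := by
    rw [show ((a:ℝ) - (b:ℝ)) = (((a:ℤ) - (b:ℤ) : ℤ) : ℝ) by push_cast; ring, ← Int.cast_abs]
    exact_mod_cast h1
  nlinarith [h2, abs_nonneg ((a:ℝ) - (b:ℝ)), sq_abs ((a:ℝ) - (b:ℝ))]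

end AuxUBG17

/-- **Theorem `thm:4udg`.**  For every finite graph `G`, the
co-2-subdivision of `G` is a 4-dimensional unit ball graph: there are points
of `ℝ⁴`, one for each vertex of the 2-subdivision of `G`, such that two
points are at distance at most `2` iff the corresponding vertices are
adjacent in the complement of the 2-subdivision of `G`. -/
theorem stmt_17 (V E : Type) [Fintype V] [Fintype E]
    (G : SimpleGraph V) (fst snd : E → V)
    (hE1 : ∀ e, G.Adj (fst e) (snd e))
    (hE2 : ∀ u v : V, G.Adj u v →
      ∃! e : E, (fst e = u ∧ snd e = v) ∨ (fst e = v ∧ snd e = u)) :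
    ∃ c : V ⊕ E × Bool → EuclideanSpace ℝ (Fin 4),
      ∀ x y : V ⊕ E × Bool, x ≠ y →
        (dist (c x) (c y) ≤ 2 ↔ (twoSubdivision fst snd)ᶜ.Adj x y) := by
  classical
  obtain ⟨ρ, hρdef⟩ : ∃ x : ℝ, x = 1/(2*((Fintype.card E : ℝ)+1)) := ⟨_, rfl⟩
  obtain ⟨σ, hσdef⟩ : ∃ x : ℝ, x = ρ/(4*((Fintype.card V : ℝ)+1)) := ⟨_, rfl⟩
  have hm0 : (0:ℝ) ≤ (Fintype.card E : ℝ) := Nat.cast_nonneg _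
  have hn0 : (0:ℝ) ≤ (Fintype.card V : ℝ) := Nat.cast_nonneg _
  have hρ : 0 < ρ := by rw [hρdef]; positivity
  have hρ2 : ρ ≤ 1/2 := by
    rw [hρdef, div_le_div_iff₀ (by positivity) (by norm_num)]
    nlinarith
  have hσ : 0 < σ := by rw [hσdef]; positivity
  have hσρ : σ ≤ ρ/4 := by
    rw [hσdef, div_le_div_iff₀ (by positivity) (by norm_num)]
    nlinarith [hρ, hn0]
  have hσn : σ * ((Fintype.card V : ℝ) + 1) = ρ/4 := by
    rw [hσdef]
    field_simp
  have hρm : ρ * ((Fintype.card E : ℝ) + 1) = 1/2 := by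
    rw [hρdef]
    field_simp
  refine build fst snd
    (fun u => σ * ((Fintype.equivFin V u : ℕ) : ℝ))
    (fun e => ρ * ((Fintype.equivFin E e : ℕ) : ℝ))
    σ ρ hσ hρ hρ2 hσρ ?_ ?_ ?_ ?_ ?_ ?_
  · intro u; positivity
  · intro u
    have hk : ((Fintype.equivFin V u : ℕ) : ℝ) ≤ (Fintype.card V : ℝ) := by
      exact_mod_cast le_of_lt (Fin.is_lt _)
    calc σ * ((Fintype.equivFin V u : ℕ) : ℝ)
        ≤ σ * ((Fintype.card V : ℝ) + 1) := by nlinarith [hσ, hk]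
      _ = ρ/4 := hσn
  · intro u v huv
    have hkk : (Fintype.equivFin V u : ℕ) ≠ (Fintype.equivFin V v : ℕ) := by
      intro h
      exact huv ((Fintype.equivFin V).injective (Fin.val_injective h))
    have hg := nat_gap hkk
    have : (σ * ((Fintype.equivFin V u : ℕ) : ℝ) - σ * ((Fintype.equivFin V v : ℕ) : ℝ))^2
        = σ^2 * (((Fintype.equivFin V u : ℕ) : ℝ) - ((Fintype.equivFin V v : ℕ) : ℝ))^2 := by
      ring
    rw [this]
    nlinarith [mul_nonneg (sq_nonneg σ)
      (by linarith :
        (0:ℝ) ≤ (((Fintype.equivFin V u : ℕ) : ℝ) - ((Fintype.equivFin V v : ℕ) : ℝ))^2 - 1)]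
  · intro e; positivity
  · intro e
    have hk : ((Fintype.equivFin E e : ℕ) : ℝ) ≤ (Fintype.card E : ℝ) := by
      exact_mod_cast le_of_lt (Fin.is_lt _)
    calc ρ * ((Fintype.equivFin E e : ℕ) : ℝ)
        ≤ ρ * ((Fintype.card E : ℝ) + 1) := by nlinarith [hρ, hk]
      _ = 1/2 := hρm
  · intro e f hef
    have hkk : (Fintype.equivFin E e : ℕ) ≠ (Fintype.equivFin E f : ℕ) := by
      intro h
      exact hef ((Fintype.equivFin E).injective (Fin.val_injective h))
    have hg := nat_gap hkk
    have : (ρ * ((Fintype.equivFin E e : ℕ) : ℝ) - ρ * ((Fintype.equivFin E f : ℕ) : ℝ))^2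
        = ρ^2 * (((Fintype.equivFin E e : ℕ) : ℝ) - ((Fintype.equivFin E f : ℕ) : ℝ))^2 := by
      ring
    rw [this]
    nlinarith [mul_nonneg (sq_nonneg ρ)
      (by linarith :
        (0:ℝ) ≤ (((Fintype.equivFin E e : ℕ) : ℝ) - ((Fintype.equivFin E f : ℕ) : ℝ))^2 - 1)]
end
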